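/- arXiv:2507.20797 — 3 statements merged into one kernel-verified Lean document; each statement's English description precedes it below -/
import Mathlib

section
/- Let φ : A → B(H) be completely positive with minimal Stinespring representation (π, V, K). The map T ↦ φ_T, where φ_T(a) = V*π(a)TV, is an affine order isomorphism from the partially ordered convex set {T ∈ π(A)' : 0 ≤ T ≤ 1_K} onto the set [0, φ] of completely positive maps θ : A → B(H) with φ − θ completely positive. -/
open scoped ComplexOrder
open ContinuousLinearMap MulOpposite

noncomputable section

/-- A linear map between (star) algebras is completely positive if for every `n`, every
`a : Fin n → A` and `b : Fin n → B`, the element `∑ i j, (b i)* φ((a i)* (a j)) (b j)` is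
positive.  For maps into `B(H)` (or any C*-algebra) this is equivalent to the usual
definition via matrix amplifications. -/
def IsCPMap {A B : Type*} [Ring A] [StarRing A] [Algebra ℂ A]
    [Ring B] [StarRing B] [Algebra ℂ B] [PartialOrder B] (φ : A →ₗ[ℂ] B) : Prop :=
  ∀ (n : ℕ) (a : Fin n → A) (b : Fin n → B),
    0 ≤ ∑ i : Fin n, ∑ j : Fin n, star (b i) * φ (star (a i) * a j) * b j

section Stinespring

variable {A H K : Type*} [CStarAlgebra A]
  [NormedAddCommGroup H] [InnerProductSpace ℂ H] [CompleteSpace H]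
  [NormedAddCommGroup K] [InnerProductSpace ℂ K] [CompleteSpace K]

/-- `(π, V, K)` is a minimal Stinespring representation of `φ : A → B(H)`. -/
def IsMinimalStinespring (φ : A →ₗ[ℂ] (H →L[ℂ] H))
    (π : A →⋆ₐ[ℂ] (K →L[ℂ] K)) (V : H →L[ℂ] K) : Prop :=
  (∀ a : A, φ a = ContinuousLinearMap.adjoint V ∘L (π a ∘L V)) ∧
  Dense ((Submodule.span ℂ {x : K | ∃ (a : A) (h : H), x = π a (V h)} : Submodule ℂ K) : Set K)

/-- The Radon–Nikodym map `T ↦ φ_T`, `φ_T(a) = V* π(a) T V`. -/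
def stinespringRN (π : A →⋆ₐ[ℂ] (K →L[ℂ] K)) (V : H →L[ℂ] K) (T : K →L[ℂ] K) :
    A →ₗ[ℂ] (H →L[ℂ] H) where
  toFun a := ContinuousLinearMap.adjoint V ∘L (π a ∘L (T ∘L V))
  map_add' a b := by simp [map_add, ContinuousLinearMap.add_comp, ContinuousLinearMap.comp_add]
  map_smul' c a := by simp [map_smul, ContinuousLinearMap.smul_comp, ContinuousLinearMap.comp_smul]

/-- The order interval `[0, φ]` of completely positive maps dominated by `φ`. -/
def CPBelow (φ : A →ₗ[ℂ] (H →L[ℂ] H)) : Set (A →ₗ[ℂ] (H →L[ℂ] H)) :=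
  {θ | IsCPMap θ ∧ IsCPMap (φ - θ)}

end Stinespring

/-- A partial action of a group `G` on a unital C*-algebra `A`: a family of closed two-sided
ideals `A_g` together with *-isomorphisms `τ_g : A_{g⁻¹} → A_g` such that `A_1 = A`, `τ_1 = id`
and `τ_g ∘ τ_h ⊆ τ_{gh}`.  The maps `τ_g` are recorded as global functions `A → A`, whose
relevant behaviour is only on the ideal `A_{g⁻¹}`. -/
structure CStarPartialAction (G A : Type*) [Group G] [CStarAlgebra A] where
  ideal : G → Submodule ℂ A
  isClosed_ideal : ∀ g, IsClosed (ideal g : Set A)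
  mul_mem_left : ∀ g (a : A), ∀ x ∈ ideal g, a * x ∈ ideal g
  mul_mem_right : ∀ g (a : A), ∀ x ∈ ideal g, x * a ∈ ideal g
  τ : G → A → A
  bijOn : ∀ g, Set.BijOn (τ g) (ideal g⁻¹) (ideal g)
  map_add : ∀ g, ∀ x ∈ ideal g⁻¹, ∀ y ∈ ideal g⁻¹, τ g (x + y) = τ g x + τ g y
  map_smul : ∀ g (c : ℂ), ∀ x ∈ ideal g⁻¹, τ g (c • x) = c • τ g x
  map_mul : ∀ g, ∀ x ∈ ideal g⁻¹, ∀ y ∈ ideal g⁻¹, τ g (x * y) = τ g x * τ g y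
  map_star : ∀ g, ∀ x ∈ ideal g⁻¹, τ g (star x) = star (τ g x)
  ideal_one : ideal 1 = ⊤
  τ_one : ∀ a, τ 1 a = a
  comp : ∀ g h, ∀ x ∈ ideal h⁻¹, τ h x ∈ ideal g⁻¹ → τ g (τ h x) = τ (g * h) x

variable {G A H K : Type*} [Group G] [CStarAlgebra A]
  [NormedAddCommGroup H] [InnerProductSpace ℂ H] [CompleteSpace H]
  [NormedAddCommGroup K] [InnerProductSpace ℂ K] [CompleteSpace K]

/-- `φ : A → B(H)` is completely positive and invariant under the partial action `τ`:
`φ(a) = φ(τ_g(a))` for all `g` and `a ∈ A_{g⁻¹}`. -/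
def IsCPInv (τ : CStarPartialAction G A) (φ : A →ₗ[ℂ] (H →L[ℂ] H)) : Prop :=
  IsCPMap φ ∧ ∀ g, ∀ a ∈ τ.ideal g⁻¹, φ a = φ (τ.τ g a)

/-- The set `UCP^{G_τ}(A, B(H))` of unital completely positive `τ`-invariant maps. -/
def UCPInvSet (τ : CStarPartialAction G A) (H : Type*) [NormedAddCommGroup H]
    [InnerProductSpace ℂ H] [CompleteSpace H] : Set (A →ₗ[ℂ] (H →L[ℂ] H)) :=
  {φ | IsCPMap φ ∧ φ 1 = 1 ∧ ∀ g, ∀ a ∈ τ.ideal g⁻¹, φ a = φ (τ.τ g a)}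

/-- The subspace `K_g = [π(A_{g⁻¹}) V H]` of the Stinespring dilation space. -/
def Kspace (τ : CStarPartialAction G A) (π : A →⋆ₐ[ℂ] (K →L[ℂ] K)) (V : H →L[ℂ] K)
    (g : G) : Submodule ℂ K :=
  (Submodule.span ℂ {x : K | ∃ a ∈ τ.ideal g⁻¹, ∃ h : H, x = π a (V h)}).topologicalClosure

/-- The family `U` of unitaries `U_g : K_{g⁻¹} → K_g` is determined by
`U_g(π(a) V h) = π(τ_{g⁻¹}(a)) V h` for `a ∈ A_g`. -/
def DeterminedU (τ : CStarPartialAction G A) (π : A →⋆ₐ[ℂ] (K →L[ℂ] K)) (V : H →L[ℂ] K)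
    (U : ∀ g : G, (Kspace τ π V g⁻¹) ≃ₗᵢ[ℂ] (Kspace τ π V g)) : Prop :=
  ∀ g, ∀ a ∈ τ.ideal g, ∀ (h : H) (x : Kspace τ π V g⁻¹),
    (x : K) = π a (V h) → ((U g x : K) = π (τ.τ g⁻¹ a) (V h))

/-- The set of operators appearing in the invariant Radon–Nikodym theorem (Stinespring
version): `T ∈ π(A)'`, `0 ≤ T ≤ 1`, `T(K_g) ⊆ K_g` and `T U_g = U_g T|_{K_{g⁻¹}}`. -/
def InvOperator (τ : CStarPartialAction G A) (π : A →⋆ₐ[ℂ] (K →L[ℂ] K)) (V : H →L[ℂ] K)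
    (U : ∀ g : G, (Kspace τ π V g⁻¹) ≃ₗᵢ[ℂ] (Kspace τ π V g)) (T : K →L[ℂ] K) : Prop :=
  (∀ a : A, Commute (π a) T) ∧ 0 ≤ T ∧ T ≤ 1 ∧
  (∀ g, ∀ x ∈ Kspace τ π V g, T x ∈ Kspace τ π V g) ∧
  (∀ g, ∀ x y : Kspace τ π V g⁻¹, (y : K) = T (x : K) → T ((U g x : K)) = (U g y : K))

/-- `C^S_φ`: the set `{α₁ T₁ + α₂ T₂ : αᵢ ∈ [-1,1], Tᵢ` invariant operators `}`. -/
def CSphi (τ : CStarPartialAction G A) (π : A →⋆ₐ[ℂ] (K →L[ℂ] K)) (V : H →L[ℂ] K)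
    (U : ∀ g : G, (Kspace τ π V g⁻¹) ≃ₗᵢ[ℂ] (Kspace τ π V g)) : Set (K →L[ℂ] K) :=
  {T | ∃ (α₁ α₂ : ℝ) (T₁ T₂ : K →L[ℂ] K), α₁ ∈ Set.Icc (-1 : ℝ) 1 ∧ α₂ ∈ Set.Icc (-1 : ℝ) 1 ∧
    InvOperator τ π V U T₁ ∧ InvOperator τ π V U T₂ ∧ T = (α₁ : ℂ) • T₁ + (α₂ : ℂ) • T₂}

/-- A closed subspace `K₀` (with orthogonal projection `P`) is faithful for a set `M ⊆ B(K)`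
if `P T|_{K₀} = 0` (equivalently `⟪T x, y⟫ = 0` for all `x y ∈ K₀`) implies `T = 0`. -/
def IsFaithfulSubspace (K₀ : Submodule ℂ K) (M : Set (K →L[ℂ] K)) : Prop :=
  ∀ T ∈ M, (∀ x ∈ K₀, ∀ y ∈ K₀, (inner ℂ (T x) y : ℂ) = 0) → T = 0
section HilbertModules

variable {B X : Type*} [Ring B] [StarRing B] [Norm B]
  [AddCommGroup X] [Module ℂ X] [Module Bᵐᵒᵖ X]

/-- `ip` is a `B`-valued inner product making the right `B`-module `X` a pre-Hilbert
`B`-module (Paschke).  Positivity of `⟨x,x⟩` is expressed in the C*-algebraic form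
`⟨x,x⟩ = c* c`. -/
structure IsPreHilbertModule (ip : X → X → B) : Prop where
  add_left : ∀ x y z : X, ip (x + y) z = ip x z + ip y z
  pos : ∀ x : X, ∃ c : B, ip x x = star c * c
  definite : ∀ x : X, ip x x = 0 → x = 0
  star_inner : ∀ x y : X, ip x y = star (ip y x)
  smul_left : ∀ (b : B) (x y : X), ip (op b • x) y = ip x y * b

/-- Completeness of `X` with respect to the norm `‖x‖ = ‖⟨x,x⟩‖^{1/2}`, expressed via
Cauchy sequences. -/
def IsHilbertComplete (ip : X → X → B) : Prop :=
  ∀ u : ℕ → X,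
    (∀ ε : ℝ, 0 < ε → ∃ N, ∀ m ≥ N, ∀ n ≥ N, ‖ip (u m - u n) (u m - u n)‖ < ε) →
    ∃ x : X, ∀ ε : ℝ, 0 < ε → ∃ N, ∀ n ≥ N, ‖ip (u n - x) (u n - x)‖ < ε

/-- `x` lies in the closure of the linear span of `S` (w.r.t. the norm induced by `ip`). -/
def InClosedSpan (ip : X → X → B) (S : Set X) (x : X) : Prop :=
  ∀ ε : ℝ, 0 < ε → ∃ y ∈ Submodule.span ℂ S, ‖ip (x - y) (x - y)‖ < ε

/-- `T : X → X` is an adjointable (bounded) operator on the pre-Hilbert module `(X, ip)`. -/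
def IsAdjointable (ip : X → X → B) (T : X → X) : Prop :=
  (∀ x y : X, T (x + y) = T x + T y) ∧
  (∃ C : ℝ, ∀ x : X, ‖ip (T x) (T x)‖ ≤ C * ‖ip x x‖) ∧
  (∃ S : X → X, ∀ x y : X, ip (T x) y = ip x (S y))

/-- A *-representation of `A` by adjointable operators on the pre-Hilbert module `(X, ip)`. -/
def IsStarRepresentation {A : Type*} [Ring A] [StarRing A] [Algebra ℂ A]
    (ip : X → X → B) (σ : A → X → X) : Prop :=
  (∀ a : A, IsAdjointable ip (σ a)) ∧
  (∀ a : A, ∀ (b : B) (x : X), σ a (op b • x) = op b • σ a x) ∧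
  (∀ a₁ a₂ : A, ∀ x : X, σ (a₁ + a₂) x = σ a₁ x + σ a₂ x) ∧
  (∀ (c : ℂ) (a : A) (x : X), σ (c • a) x = c • σ a x) ∧
  (∀ a₁ a₂ : A, ∀ x : X, σ (a₁ * a₂) x = σ a₁ (σ a₂ x)) ∧
  (∀ (a : A) (x y : X), ip (σ a x) y = ip x (σ (star a) y))

/-- `(σ, e, X)` is a Paschke dilation of `φ : A → B`. -/
def IsPaschkeDilation {A : Type*} [Ring A] [StarRing A] [Algebra ℂ A]
    (ip : X → X → B) (σ : A → X → X) (e : X) (φ : A → B) : Prop :=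
  IsPreHilbertModule ip ∧ IsHilbertComplete ip ∧ IsStarRepresentation ip σ ∧
  (∀ a : A, φ a = ip (σ a e) e) ∧
  (∀ x : X, InClosedSpan ip {z : X | ∃ (a : A) (b : B), z = σ a (op b • e)} x)

/-- A bounded `B`-module map `f : X → B`, i.e. an element of the dual module `X'`. -/
def IsBddModMap (ip : X → X → B) (f : X → B) : Prop :=
  (∀ x y : X, f (x + y) = f x + f y) ∧
  (∀ (b : B) (x : X), f (op b • x) = f x * b) ∧
  (∃ C : ℝ, ∀ x : X, ‖f x‖ ^ 2 ≤ C * ‖ip x x‖)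

/-- `ip'` is an extension of the `B`-valued inner product of `(X, ip)` to the dual module
`X' = {` bounded `B`-module maps `X → B}` (whose elements are represented here as functions
`X → B` satisfying `IsBddModMap`), making `X'` a self-dual Hilbert `B`-module and satisfying
`⟨x̂, f⟩ = f x`.  The right `B`-action on `X'` is `(f · b) x = b* (f x)`. -/
def IsSelfDualExtension (ip : X → X → B) (ip' : (X → B) → (X → B) → B) : Prop :=
  (∀ f g h : X → B, IsBddModMap ip f → IsBddModMap ip g → IsBddModMap ip h →
      ip' (f + g) h = ip' f h + ip' g h) ∧
  (∀ f : X → B, IsBddModMap ip f → ∃ c : B, ip' f f = star c * c) ∧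
  (∀ f : X → B, IsBddModMap ip f → ip' f f = 0 → f = 0) ∧
  (∀ f g : X → B, IsBddModMap ip f → IsBddModMap ip g → ip' f g = star (ip' g f)) ∧
  (∀ (b : B) (f g : X → B), IsBddModMap ip f → IsBddModMap ip g →
      ip' (fun x => star b * f x) g = ip' f g * b) ∧
  (∀ (x : X) (f : X → B), IsBddModMap ip f → ip' (fun y => ip y x) f = f x) ∧
  (∀ F : (X → B) → B,
      ((∀ f g : X → B, IsBddModMap ip f → IsBddModMap ip g → F (f + g) = F f + F g) ∧
       (∀ (b : B) (f : X → B), IsBddModMap ip f → F (fun x => star b * f x) = F f * b) ∧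
       (∃ C : ℝ, ∀ f : X → B, IsBddModMap ip f → ‖F f‖ ^ 2 ≤ C * ‖ip' f f‖)) →
      ∃ g : X → B, IsBddModMap ip g ∧ ∀ f : X → B, IsBddModMap ip f → F f = ip' f g) ∧
  (∀ u : ℕ → X → B, (∀ n, IsBddModMap ip (u n)) →
      (∀ ε : ℝ, 0 < ε → ∃ N, ∀ m ≥ N, ∀ n ≥ N, ‖ip' (u m - u n) (u m - u n)‖ < ε) →
      ∃ f : X → B, IsBddModMap ip f ∧
        ∀ ε : ℝ, 0 < ε → ∃ N, ∀ n ≥ N, ‖ip' (u n - f) (u n - f)‖ < ε)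

/-- An adjointable operator on the self-dual dual module `X'`. -/
def IsAdjointableOnDual (ip : X → X → B) (ip' : (X → B) → (X → B) → B)
    (T : (X → B) → (X → B)) : Prop :=
  (∀ f : X → B, IsBddModMap ip f → IsBddModMap ip (T f)) ∧
  (∀ f g : X → B, IsBddModMap ip f → IsBddModMap ip g → T (f + g) = T f + T g) ∧
  (∃ S : (X → B) → (X → B), (∀ f, IsBddModMap ip f → IsBddModMap ip (S f)) ∧
    ∀ f g : X → B, IsBddModMap ip f → IsBddModMap ip g → ip' (T f) g = ip' f (S g))

end HilbertModules

/-- A bundled complex Hilbert space. -/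
structure HilbertCat.{w} where
  X : Type w
  [grp : NormedAddCommGroup X]
  [ips : InnerProductSpace ℂ X]
  [cs : CompleteSpace X]

attribute [instance] HilbertCat.grp HilbertCat.ips HilbertCat.cs

/-- A bundled right `B`-module carrying also a `ℂ`-module structure. -/
structure RightModuleCat.{w, w'} (B : Type w') [Ring B] where
  X : Type w
  [grp : AddCommGroup X]
  [modC : Module ℂ X]
  [modB : Module Bᵐᵒᵖ X]

attribute [instance] RightModuleCat.grp RightModuleCat.modC RightModuleCat.modB

section PaschkeRN

variable {A H X : Type*} [CStarAlgebra A]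
  [NormedAddCommGroup H] [InnerProductSpace ℂ H] [CompleteSpace H]
  [AddCommGroup X] [Module ℂ X] [Module (H →L[ℂ] H)ᵐᵒᵖ X]

/-- The canonical embedding `X → X'`, `x ↦ x̂ = ⟨·, x⟩`. -/
def hatvec (ip : X → X → (H →L[ℂ] H)) (x : X) : X → (H →L[ℂ] H) := fun y => ip y x

/-- `T` is a positive contraction in the commutant `σ̃(A)' ⊆ P(X')`:
`T` is adjointable on the self-dual completion, commutes with the extended representation
`σ̃` (where `σ̃(a) f = f ∘ σ(a*)`), and `0 ≤ T ≤ 1`. -/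
def DualContraction (ip : X → X → (H →L[ℂ] H))
    (ip' : (X → (H →L[ℂ] H)) → (X → (H →L[ℂ] H)) → (H →L[ℂ] H)) (σ : A → X → X)
    (T : (X → (H →L[ℂ] H)) → (X → (H →L[ℂ] H))) : Prop :=
  IsAdjointableOnDual ip ip' T ∧
  (∀ (a : A) (f : X → (H →L[ℂ] H)), IsBddModMap ip f →
      T (fun y => f (σ (star a) y)) = fun y => T f (σ (star a) y)) ∧
  (∀ f : X → (H →L[ℂ] H), IsBddModMap ip f → 0 ≤ ip' (T f) f ∧ 0 ≤ ip' (f - T f) f)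

/-- The Radon–Nikodym derivative map in Paschke's setting: `φ_T(a) = ⟨T σ̃(a) ê, ê⟩`. -/
def paschkeRN (ip : X → X → (H →L[ℂ] H))
    (ip' : (X → (H →L[ℂ] H)) → (X → (H →L[ℂ] H)) → (H →L[ℂ] H)) (σ : A → X → X) (e : X)
    (T : (X → (H →L[ℂ] H)) → (X → (H →L[ℂ] H))) : A → (H →L[ℂ] H) :=
  fun a => ip' (T (hatvec ip (σ a e))) (hatvec ip e)

end PaschkeRN

section PaschkeInv

variable {G A H X : Type*} [Group G] [CStarAlgebra A]
  [NormedAddCommGroup H] [InnerProductSpace ℂ H] [CompleteSpace H]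
  [AddCommGroup X] [Module ℂ X] [Module (H →L[ℂ] H)ᵐᵒᵖ X]

/-- The submodule `X_g`, the closed span of `σ(A_{g⁻¹})(e B(H))`. -/
def Xsub (τ : CStarPartialAction G A) (ip : X → X → (H →L[ℂ] H)) (σ : A → X → X) (e : X)
    (g : G) : Set X :=
  {x | InClosedSpan ip {z | ∃ a ∈ τ.ideal g⁻¹, ∃ S : H →L[ℂ] H, z = σ a (op S • e)} x}

/-- The operators appearing in the invariant Radon–Nikodym theorem (Paschke version):
positive contractions `T` in the commutant `σ̃(A)'` with `T(Y_g) ⊆ Y_g` and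
`T W̃_g|_{Y_{g⁻¹}} = W̃_g T|_{Y_{g⁻¹}}` for all `g`, where `Y_{g⁻¹} = {σ̃(a) ê : a ∈ A_g}`
and `W̃_g` is the extension of `W_g`, determined on `Y_{g⁻¹}` by
`W̃_g (σ̃(a) ê) = σ̃(τ_{g⁻¹}(a)) ê`. -/
def InvDualOperator (τ : CStarPartialAction G A) (ip : X → X → (H →L[ℂ] H))
    (ip' : (X → (H →L[ℂ] H)) → (X → (H →L[ℂ] H)) → (H →L[ℂ] H)) (σ : A → X → X) (e : X)
    (T : (X → (H →L[ℂ] H)) → (X → (H →L[ℂ] H))) : Prop :=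
  DualContraction ip ip' σ T ∧
  (∀ g : G, ∀ a ∈ τ.ideal g⁻¹, ∃ a' ∈ τ.ideal g⁻¹,
      T (hatvec ip (σ a e)) = hatvec ip (σ a' e)) ∧
  (∀ g : G, ∀ a ∈ τ.ideal g, ∀ a' ∈ τ.ideal g,
      T (hatvec ip (σ a e)) = hatvec ip (σ a' e) →
      T (hatvec ip (σ (τ.τ g⁻¹ a) e)) = hatvec ip (σ (τ.τ g⁻¹ a') e))

/-- `C^P_φ`: combinations `α₁ T₁ + α₂ T₂` with `αᵢ ∈ [-1,1]` and `Tᵢ` invariant operators. -/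
def CPphiSet (τ : CStarPartialAction G A) (ip : X → X → (H →L[ℂ] H))
    (ip' : (X → (H →L[ℂ] H)) → (X → (H →L[ℂ] H)) → (H →L[ℂ] H)) (σ : A → X → X) (e : X) :
    Set ((X → (H →L[ℂ] H)) → (X → (H →L[ℂ] H))) :=
  {T | ∃ (α₁ α₂ : ℝ) (T₁ T₂ : (X → (H →L[ℂ] H)) → (X → (H →L[ℂ] H))),
    α₁ ∈ Set.Icc (-1 : ℝ) 1 ∧ α₂ ∈ Set.Icc (-1 : ℝ) 1 ∧
    InvDualOperator τ ip ip' σ e T₁ ∧ InvDualOperator τ ip ip' σ e T₂ ∧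
    T = fun f => (α₁ : ℂ) • T₁ f + (α₂ : ℂ) • T₂ f}

end PaschkeInv

section RNAuxSec

namespace RNaux

variable {𝓐 𝓗 𝓚 : Type*} [CStarAlgebra 𝓐]
  [NormedAddCommGroup 𝓗] [InnerProductSpace ℂ 𝓗] [CompleteSpace 𝓗]
  [NormedAddCommGroup 𝓚] [InnerProductSpace ℂ 𝓚] [CompleteSpace 𝓚]

lemma op_nonneg_iff (T : 𝓗 →L[ℂ] 𝓗) :
    0 ≤ T ↔ ∀ x : 𝓗, 0 ≤ (inner ℂ x (T x) : ℂ) := by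
  rw [ContinuousLinearMap.nonneg_iff_isPositive, ContinuousLinearMap.isPositive_iff_complex]
  constructor
  · intro hT x
    obtain ⟨h1, h2⟩ := hT x
    rw [RCLike.re_to_complex] at h1 h2
    have him : (inner ℂ (T x) x : ℂ).im = 0 := by
      have := congrArg Complex.im h1
      simpa using this.symm
    rw [← inner_conj_symm x (T x), Complex.nonneg_iff]
    exact ⟨by rw [Complex.conj_re]; exact h2, by rw [Complex.conj_im, him, neg_zero]⟩
  · intro hin x
    have h0 := Complex.nonneg_iff.mp (hin x)
    have him : (inner ℂ x (T x) : ℂ).im = 0 := h0.2.symm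
    have hz : (inner ℂ (T x) x : ℂ) = (starRingEnd ℂ) (inner ℂ x (T x) : ℂ) :=
      (inner_conj_symm (T x) x).symm
    refine ⟨?_, ?_⟩
    · rw [RCLike.re_to_complex, hz]
      apply Complex.ext
      · rw [Complex.ofReal_re]
      · rw [Complex.ofReal_im, Complex.conj_im, him, neg_zero]
    · rw [RCLike.re_to_complex, hz, Complex.conj_re]
      exact h0.1

lemma cp_inner {θ : 𝓐 →ₗ[ℂ] (𝓗 →L[ℂ] 𝓗)} (hθ : IsCPMap θ) (n : ℕ) (a : Fin n → 𝓐)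
    (h : Fin n → 𝓗) :
    0 ≤ ∑ i : Fin n, ∑ j : Fin n, (inner ℂ (h i) (θ (star (a i) * a j) (h j)) : ℂ) := by
  rcases subsingleton_or_nontrivial 𝓗 with hs | hs
  · have hz : ∀ i j : Fin n, (inner ℂ (h i) (θ (star (a i) * a j) (h j)) : ℂ) = 0 := fun i j => by
      rw [Subsingleton.elim (h i) (0 : 𝓗), inner_zero_left]
    simp [hz]
  · obtain ⟨x0, hx0⟩ := exists_ne (0 : 𝓗)
    have hx0' : ‖x0‖ ≠ 0 := norm_ne_zero_iff.mpr hx0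
    set e : 𝓗 := ((‖x0‖⁻¹ : ℝ) : ℂ) • x0 with he
    have hnorm : ‖e‖ = 1 := by
      rw [he, norm_smul, Complex.norm_real, Real.norm_eq_abs, abs_of_nonneg (by positivity)]
      exact inv_mul_cancel₀ hx0'
    have hee : (inner ℂ e e : ℂ) = 1 := by
      rw [inner_self_eq_norm_sq_to_K, hnorm]
      norm_num
    set b : Fin n → (𝓗 →L[ℂ] 𝓗) := fun i => (innerSL ℂ e).smulRight (h i) with hb
    have hbe : ∀ i, b i e = h i := fun i => by
      simp [hb, ContinuousLinearMap.smulRight_apply, hee, hnorm]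
    have h0 := (op_nonneg_iff _).mp (hθ n a b) e
    refine le_of_le_of_eq h0 ?_
    simp only [ContinuousLinearMap.sum_apply, inner_sum]
    refine Finset.sum_congr rfl fun i _ => Finset.sum_congr rfl fun j _ => ?_
    rw [ContinuousLinearMap.mul_apply, ContinuousLinearMap.mul_apply,
      ContinuousLinearMap.star_eq_adjoint, ContinuousLinearMap.adjoint_inner_right, hbe, hbe]

lemma cp_inner' {θ : 𝓐 →ₗ[ℂ] (𝓗 →L[ℂ] 𝓗)} (hθ : IsCPMap θ) {ι : Type*} [Fintype ι]
    (a : ι → 𝓐) (h : ι → 𝓗) :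
    0 ≤ ∑ i : ι, ∑ j : ι, (inner ℂ (h i) (θ (star (a i) * a j) (h j)) : ℂ) := by
  classical
  let e := Fintype.equivFin ι
  have h1 : 0 ≤ ∑ k : Fin (Fintype.card ι), ∑ j : ι,
      (inner ℂ (h (e.symm k)) (θ (star (a (e.symm k)) * a j) (h j)) : ℂ) := by
    refine le_of_le_of_eq (cp_inner hθ _ (a ∘ e.symm) (h ∘ e.symm)) ?_
    refine Finset.sum_congr rfl fun k _ => ?_
    rw [← Equiv.sum_comp e.symm
      (fun j => (inner ℂ (h (e.symm k)) (θ (star (a (e.symm k)) * a j) (h j)) : ℂ))]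
    simp only [Function.comp_apply]
  refine le_of_le_of_eq h1 ?_
  exact Equiv.sum_comp e.symm (fun i => ∑ j : ι, (inner ℂ (h i) (θ (star (a i) * a j) (h j)) : ℂ))

lemma cp_star {θ : 𝓐 →ₗ[ℂ] (𝓗 →L[ℂ] 𝓗)} (hθ : IsCPMap θ) (x : 𝓐) :
    ContinuousLinearMap.adjoint (θ x) = θ (star x) := by
  ext k
  refine ext_inner_left ℂ fun h2 => ?_
  rw [ContinuousLinearMap.adjoint_inner_right]
  set A0 : ℂ := inner ℂ k (θ x h2) with hA0
  set B0 : ℂ := inner ℂ h2 (θ (star x) k) with hB0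
  set P : ℂ := inner ℂ k (θ 1 k) with hP
  set Q : ℂ := inner ℂ h2 (θ (star x * x) h2) with hQ
  have hPpos : 0 ≤ P := by
    have := cp_inner hθ 1 ![1] ![k]
    simpa [hP] using this
  have hQpos : 0 ≤ Q := by
    have := cp_inner hθ 1 ![x] ![h2]
    simpa [hQ] using this
  have key : ∀ c : ℂ, 0 ≤ (starRingEnd ℂ) c * c * P + ((starRingEnd ℂ) c * A0 + (c * B0 + Q)) := by
    intro c
    have h0 := cp_inner hθ 2 ![1, x] ![c • k, h2]
    refine le_of_le_of_eq h0 ?_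
    simp only [Fin.sum_univ_two, Matrix.cons_val_zero, Matrix.cons_val_one, Matrix.head_cons,
      star_one, one_mul, mul_one, map_smul, inner_smul_left, inner_smul_right, smul_eq_mul,
      hA0, hB0, hP, hQ]
    ring
  have imP : P.im = 0 := (Complex.nonneg_iff.mp hPpos).2.symm
  have imQ : Q.im = 0 := (Complex.nonneg_iff.mp hQpos).2.symm
  have e1 := (Complex.nonneg_iff.mp (key 1)).2
  have e2 := (Complex.nonneg_iff.mp (key Complex.I)).2
  simp only [map_one, one_mul, mul_one, Complex.add_im, Complex.mul_im, Complex.conj_I,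
    Complex.I_re, Complex.I_im, Complex.one_re, Complex.one_im, Complex.neg_im, Complex.neg_re,
    Complex.mul_re, imP, imQ] at e1 e2
  have hgoal : (inner ℂ (θ x h2) k : ℂ) = (starRingEnd ℂ) A0 := (inner_conj_symm (θ x h2) k).symm
  rw [hgoal]
  apply Complex.ext
  · simp only [Complex.conj_re]
    linarith
  · simp only [Complex.conj_im]
    linarith

variable (θ : 𝓐 →ₗ[ℂ] (𝓗 →L[ℂ] 𝓗))

/-- Formal sesquilinear form on the free module. -/
def mf (f g : (𝓐 × 𝓗) →₀ ℂ) : ℂ :=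
  f.sum fun p c => g.sum fun q d =>
    (starRingEnd ℂ) c * d * (inner ℂ p.2 (θ (star p.1 * q.1) q.2) : ℂ)

lemma mf_eq (f g : (𝓐 × 𝓗) →₀ ℂ) :
    mf θ f g = ∑ p ∈ f.support, ∑ q ∈ g.support,
      (starRingEnd ℂ) (f p) * (g q) * (inner ℂ p.2 (θ (star p.1 * q.1) q.2) : ℂ) := rfl

lemma mf_single (p q : 𝓐 × 𝓗) (c d : ℂ) :
    mf θ (Finsupp.single p c) (Finsupp.single q d) =
      (starRingEnd ℂ) c * d * (inner ℂ p.2 (θ (star p.1 * q.1) q.2) : ℂ) := by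
  unfold mf
  rw [Finsupp.sum_single_index (by simp), Finsupp.sum_single_index (by simp)]

lemma mf_add_left (f g h : (𝓐 × 𝓗) →₀ ℂ) : mf θ (f + g) h = mf θ f h + mf θ g h := by
  unfold mf
  rw [Finsupp.sum_add_index']
  · intro p
    simp
  · intro p c d
    rw [← Finsupp.sum_add]
    refine Finsupp.sum_congr fun q _ => ?_
    rw [map_add]
    ring

lemma mf_smul_left (r : ℂ) (f g : (𝓐 × 𝓗) →₀ ℂ) :
    mf θ (r • f) g = (starRingEnd ℂ) r * mf θ f g := by
  unfold mf
  rw [Finsupp.sum_smul_index' (by intro p; simp), Finsupp.mul_sum]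
  refine Finsupp.sum_congr fun p _ => ?_
  rw [Finsupp.mul_sum]
  refine Finsupp.sum_congr fun q _ => ?_
  rw [smul_eq_mul, map_mul]
  ring

lemma mf_add_right (f g h : (𝓐 × 𝓗) →₀ ℂ) : mf θ f (g + h) = mf θ f g + mf θ f h := by
  unfold mf
  rw [← Finsupp.sum_add]
  refine Finsupp.sum_congr fun p _ => ?_
  rw [Finsupp.sum_add_index']
  · intro q; simp
  · intro q c d; ring

lemma mf_smul_right (r : ℂ) (f g : (𝓐 × 𝓗) →₀ ℂ) : mf θ f (r • g) = r * mf θ f g := by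
  unfold mf
  rw [Finsupp.mul_sum]
  refine Finsupp.sum_congr fun p _ => ?_
  rw [Finsupp.sum_smul_index' (by intro q; simp), Finsupp.mul_sum]
  refine Finsupp.sum_congr fun q _ => ?_
  rw [smul_eq_mul]
  ring

lemma mf_sub_left (f g h : (𝓐 × 𝓗) →₀ ℂ) : mf θ (f - g) h = mf θ f h - mf θ g h := by
  have h1 := mf_add_left θ (f - g) g h
  rw [sub_add_cancel] at h1
  rw [eq_sub_iff_add_eq, ← h1]

lemma mf_theta_sub (θ₁ θ₂ : 𝓐 →ₗ[ℂ] (𝓗 →L[ℂ] 𝓗)) (f g : (𝓐 × 𝓗) →₀ ℂ) :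
    mf (θ₁ - θ₂) f g = mf θ₁ f g - mf θ₂ f g := by
  rw [mf_eq, mf_eq, mf_eq, ← Finset.sum_sub_distrib]
  refine Finset.sum_congr rfl fun p _ => ?_
  rw [← Finset.sum_sub_distrib]
  refine Finset.sum_congr rfl fun q _ => ?_
  rw [LinearMap.sub_apply, ContinuousLinearMap.sub_apply, inner_sub_right]
  ring

lemma mf_conj {θ : 𝓐 →ₗ[ℂ] (𝓗 →L[ℂ] 𝓗)} (hθ : IsCPMap θ) (f g : (𝓐 × 𝓗) →₀ ℂ) :
    (starRingEnd ℂ) (mf θ g f) = mf θ f g := by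
  rw [mf_eq, mf_eq, map_sum, Finset.sum_comm]
  refine Finset.sum_congr rfl fun p _ => ?_
  rw [map_sum]
  refine Finset.sum_congr rfl fun q _ => ?_
  rw [map_mul, map_mul]
  have hip : (starRingEnd ℂ) (inner ℂ p.2 (θ (star p.1 * q.1) q.2) : ℂ)
      = (inner ℂ q.2 (θ (star q.1 * p.1) p.2) : ℂ) := by
    rw [inner_conj_symm, ← ContinuousLinearMap.adjoint_inner_right, cp_star hθ,
      star_mul, star_star]
  rw [hip, Complex.conj_conj]
  ring

lemma mf_nonneg {θ : 𝓐 →ₗ[ℂ] (𝓗 →L[ℂ] 𝓗)} (hθ : IsCPMap θ) (f : (𝓐 × 𝓗) →₀ ℂ) :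
    0 ≤ mf θ f f := by
  have h0 := cp_inner' hθ (ι := ↥f.support) (fun p => (p : 𝓐 × 𝓗).1)
    (fun p => f ↑p • (p : 𝓐 × 𝓗).2)
  refine le_of_le_of_eq h0 ?_
  rw [mf_eq]
  have hterm : ∀ i j : ↥f.support,
      (inner ℂ (f ↑i • (↑i : 𝓐 × 𝓗).2)
        (θ (star (↑i : 𝓐 × 𝓗).1 * (↑j : 𝓐 × 𝓗).1) (f ↑j • (↑j : 𝓐 × 𝓗).2)) : ℂ)
      = (starRingEnd ℂ) (f ↑i) * (f ↑j) *
        (inner ℂ (↑i : 𝓐 × 𝓗).2 (θ (star (↑i : 𝓐 × 𝓗).1 * (↑j : 𝓐 × 𝓗).1) (↑j : 𝓐 × 𝓗).2) : ℂ) := by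
    intro i j
    rw [map_smul, inner_smul_left, inner_smul_right]
    ring
  simp only [hterm]
  refine Eq.trans ?_ (Finset.sum_coe_sort f.support
    (fun p => ∑ q ∈ f.support, (starRingEnd ℂ) (f p) * (f q) *
      (inner ℂ p.2 (θ (star p.1 * q.1) q.2) : ℂ)))
  exact Finset.sum_congr rfl fun i _ => Finset.sum_coe_sort f.support
    (fun q => (starRingEnd ℂ) (f ↑i) * (f q) *
      (inner ℂ (↑i : 𝓐 × 𝓗).2 (θ (star (↑i : 𝓐 × 𝓗).1 * q.1) q.2) : ℂ))

/-- The canonical map from the free module onto the span. -/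
def Qmap (π : 𝓐 →⋆ₐ[ℂ] (𝓚 →L[ℂ] 𝓚)) (V : 𝓗 →L[ℂ] 𝓚) : ((𝓐 × 𝓗) →₀ ℂ) →ₗ[ℂ] 𝓚 :=
  Finsupp.lsum ℂ fun p => LinearMap.toSpanSingleton ℂ 𝓚 (π p.1 (V p.2))

lemma Qmap_eq (π : 𝓐 →⋆ₐ[ℂ] (𝓚 →L[ℂ] 𝓚)) (V : 𝓗 →L[ℂ] 𝓚) (f : (𝓐 × 𝓗) →₀ ℂ) :
    Qmap π V f = ∑ p ∈ f.support, f p • π p.1 (V p.2) := rfl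

lemma Qmap_single (π : 𝓐 →⋆ₐ[ℂ] (𝓚 →L[ℂ] 𝓚)) (V : 𝓗 →L[ℂ] 𝓚) (p : 𝓐 × 𝓗) (c : ℂ) :
    Qmap π V (Finsupp.single p c) = c • π p.1 (V p.2) := by
  unfold Qmap
  simp

lemma pi_adj (π : 𝓐 →⋆ₐ[ℂ] (𝓚 →L[ℂ] 𝓚)) (a : 𝓐) :
    ContinuousLinearMap.adjoint (π a) = π (star a) := by
  rw [← ContinuousLinearMap.star_eq_adjoint, ← map_star]

lemma mf_phi {φ : 𝓐 →ₗ[ℂ] (𝓗 →L[ℂ] 𝓗)} {π : 𝓐 →⋆ₐ[ℂ] (𝓚 →L[ℂ] 𝓚)} {V : 𝓗 →L[ℂ] 𝓚}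
    (hrep : ∀ a : 𝓐, φ a = ContinuousLinearMap.adjoint V ∘L (π a ∘L V))
    (f g : (𝓐 × 𝓗) →₀ ℂ) :
    mf φ f g = (inner ℂ (Qmap π V f) (Qmap π V g) : ℂ) := by
  rw [mf_eq, Qmap_eq, Qmap_eq, sum_inner]
  refine Finset.sum_congr rfl fun p _ => ?_
  rw [inner_sum]
  refine Finset.sum_congr rfl fun q _ => ?_
  rw [inner_smul_left, inner_smul_right]
  have hipp : (inner ℂ (π p.1 (V p.2)) (π q.1 (V q.2)) : ℂ)
      = (inner ℂ p.2 (φ (star p.1 * q.1) q.2) : ℂ) := by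
    rw [hrep]
    simp only [ContinuousLinearMap.coe_comp', Function.comp_apply]
    rw [ContinuousLinearMap.adjoint_inner_right, map_mul, ContinuousLinearMap.mul_apply,
      ← pi_adj, ContinuousLinearMap.adjoint_inner_right]
  rw [hipp]
  ring

lemma mf_cs {θ : 𝓐 →ₗ[ℂ] (𝓗 →L[ℂ] 𝓗)} (hθ : IsCPMap θ) (f g : (𝓐 × 𝓗) →₀ ℂ) :
    ‖mf θ f g‖ ^ 2 ≤ (mf θ f f).re * (mf θ g g).re := by
  let c : PreInnerProductSpace.Core ℂ ((𝓐 × 𝓗) →₀ ℂ) :=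
    { inner := mf θ
      conj_inner_symm := fun x y => mf_conj hθ x y
      re_inner_nonneg := fun x => by
        have := (Complex.nonneg_iff.mp (mf_nonneg hθ x)).1
        simpa [RCLike.re_to_complex] using this
      add_left := mf_add_left θ
      smul_left := fun x y r => mf_smul_left θ r x y }
  have h := @InnerProductSpace.Core.inner_mul_inner_self_le ℂ _ _ _ _ c f g
  have hsy : ‖mf θ g f‖ = ‖mf θ f g‖ := by
    rw [← mf_conj hθ f g, RCLike.norm_conj]
  have h' : ‖mf θ f g‖ * ‖mf θ f g‖ ≤ (mf θ f f).re * (mf θ g g).re := by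
    have : ‖mf θ f g‖ * ‖mf θ g f‖ ≤ (mf θ f f).re * (mf θ g g).re := h
    rwa [hsy] at this
  rwa [sq]

lemma mf_bound {φ θ : 𝓐 →ₗ[ℂ] (𝓗 →L[ℂ] 𝓗)} {π : 𝓐 →⋆ₐ[ℂ] (𝓚 →L[ℂ] 𝓚)} {V : 𝓗 →L[ℂ] 𝓚}
    (hθ : IsCPMap θ) (hsub : IsCPMap (φ - θ))
    (hrep : ∀ a : 𝓐, φ a = ContinuousLinearMap.adjoint V ∘L (π a ∘L V))
    (f g : (𝓐 × 𝓗) →₀ ℂ) :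
    ‖mf θ f g‖ ≤ ‖Qmap π V f‖ * ‖Qmap π V g‖ := by
  have hsq : ∀ f : (𝓐 × 𝓗) →₀ ℂ, (mf θ f f).re ≤ ‖Qmap π V f‖ ^ 2 := by
    intro f
    have h1 := (Complex.nonneg_iff.mp (mf_nonneg hsub f)).1
    rw [mf_theta_sub, Complex.sub_re] at h1
    have h2 : (mf φ f f).re = ‖Qmap π V f‖ ^ 2 := by
      rw [mf_phi hrep, inner_self_eq_norm_sq_to_K]
      simp [← Complex.ofReal_pow]
    linarith
  have hcs := mf_cs hθ f g
  have hf := hsq f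
  have hg := hsq g
  have h0 : 0 ≤ (mf θ g g).re := by
    have := (Complex.nonneg_iff.mp (mf_nonneg hθ g)).1
    simpa using this
  have h0' : 0 ≤ (mf θ f f).re := by
    have := (Complex.nonneg_iff.mp (mf_nonneg hθ f)).1
    simpa using this
  nlinarith [norm_nonneg (mf θ f g), norm_nonneg (Qmap π V f), norm_nonneg (Qmap π V g),
    mul_nonneg (norm_nonneg (Qmap π V f)) (norm_nonneg (Qmap π V g)), sq_nonneg (‖Qmap π V f‖ - ‖Qmap π V g‖)]

lemma Q_surj (π : 𝓐 →⋆ₐ[ℂ] (𝓚 →L[ℂ] 𝓚)) (V : 𝓗 →L[ℂ] 𝓚) {x : 𝓚}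
    (hx : x ∈ Submodule.span ℂ {x : 𝓚 | ∃ (a : 𝓐) (h : 𝓗), x = π a (V h)}) :
    ∃ f, Qmap π V f = x := by
  have hle : Submodule.span ℂ {x : 𝓚 | ∃ (a : 𝓐) (h : 𝓗), x = π a (V h)}
      ≤ LinearMap.range (Qmap π V) := by
    rw [Submodule.span_le]
    rintro y ⟨a, h, rfl⟩
    exact ⟨Finsupp.single (a, h) 1, by rw [Qmap_single, one_smul]⟩
  exact hle hx

lemma span_rep {π : 𝓐 →⋆ₐ[ℂ] (𝓚 →L[ℂ] 𝓚)} {V : 𝓗 →L[ℂ] 𝓚} {z : 𝓚}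
    (hz : z ∈ Submodule.span ℂ {x : 𝓚 | ∃ (a : 𝓐) (h : 𝓗), x = π a (V h)}) :
    ∃ (n : ℕ) (a : Fin n → 𝓐) (h : Fin n → 𝓗), z = ∑ i, π (a i) (V (h i)) := by
  induction hz using Submodule.span_induction with
  | mem y hy =>
    obtain ⟨a, h, rfl⟩ := hy
    exact ⟨1, ![a], ![h], by simp⟩
  | zero => exact ⟨0, ![], ![], by simp⟩
  | add u v _ _ hu hv =>
    obtain ⟨n, a, h, rfl⟩ := hu
    obtain ⟨m, b, k, rfl⟩ := hv
    refine ⟨n + m, Fin.append a b, Fin.append h k, ?_⟩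
    rw [Fin.sum_univ_add]
    simp [Fin.append_left, Fin.append_right]
  | smul c u _ hu =>
    obtain ⟨n, a, h, rfl⟩ := hu
    refine ⟨n, a, fun i => c • h i, ?_⟩
    rw [Finset.smul_sum]
    exact Finset.sum_congr rfl fun i _ => by rw [map_smul, map_smul]

lemma surj {φ θ : 𝓐 →ₗ[ℂ] (𝓗 →L[ℂ] 𝓗)} {π : 𝓐 →⋆ₐ[ℂ] (𝓚 →L[ℂ] 𝓚)} {V : 𝓗 →L[ℂ] 𝓚}
    (hrep : ∀ a : 𝓐, φ a = ContinuousLinearMap.adjoint V ∘L (π a ∘L V))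
    (hdense : Dense ((Submodule.span ℂ {x : 𝓚 | ∃ (a : 𝓐) (h : 𝓗), x = π a (V h)} :
      Submodule ℂ 𝓚) : Set 𝓚))
    (hθ : IsCPMap θ) (hsub : IsCPMap (φ - θ)) :
    ∃ T : 𝓚 →L[ℂ] 𝓚, (∀ a : 𝓐, Commute (π a) T) ∧ 0 ≤ T ∧ T ≤ 1 ∧ stinespringRN π V T = θ := by
  classical
  set M : Submodule ℂ 𝓚 := Submodule.span ℂ {x : 𝓚 | ∃ (a : 𝓐) (h : 𝓗), x = π a (V h)} with hM
  have hQs : ∀ x : ↥M, ∃ f, Qmap π V f = (x : 𝓚) := fun x => Q_surj π V (hM ▸ x.2)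
  choose r hr using hQs
  -- well-definedness of the form as a function of the vectors
  have wd : ∀ f f' g : ((𝓐 × 𝓗) →₀ ℂ), Qmap π V f = Qmap π V f' → mf θ f g = mf θ f' g := by
    intro f f' g hQe
    have hb := mf_bound hθ hsub hrep (f - f') g
    rw [map_sub, hQe, sub_self, norm_zero, zero_mul, mf_sub_left] at hb
    have := norm_le_zero_iff.mp hb
    exact sub_eq_zero.mp this
  have wd' : ∀ f g g' : ((𝓐 × 𝓗) →₀ ℂ), Qmap π V g = Qmap π V g' → mf θ f g = mf θ f g' := by
    intro f g g' hQe
    rw [← mf_conj hθ f g, ← mf_conj hθ f g', wd g g' f hQe]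
  -- the linear functional attached to g
  set ℓ : ((𝓐 × 𝓗) →₀ ℂ) → (↥M →ₗ[ℂ] ℂ) := fun g =>
    { toFun := fun x => (starRingEnd ℂ) (mf θ (r x) g)
      map_add' := fun x y => by
        have h1 : Qmap π V (r (x + y)) = Qmap π V (r x + r y) := by
          rw [map_add, hr, hr, hr, Submodule.coe_add]
        rw [wd _ _ _ h1, mf_add_left, map_add]
      map_smul' := fun c x => by
        have h1 : Qmap π V (r (c • x)) = Qmap π V (c • r x) := by
          rw [map_smul, hr, hr, Submodule.coe_smul]
        rw [wd _ _ _ h1, mf_smul_left, map_mul, Complex.conj_conj]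
        rfl } with hℓ
  have ℓbound : ∀ g (x : ↥M), ‖ℓ g x‖ ≤ ‖Qmap π V g‖ * ‖x‖ := by
    intro g x
    rw [hℓ]
    simp only [LinearMap.coe_mk, AddHom.coe_mk]
    rw [RCLike.norm_conj]
    calc ‖mf θ (r x) g‖ ≤ ‖Qmap π V (r x)‖ * ‖Qmap π V g‖ := mf_bound hθ hsub hrep _ _
    _ = ‖Qmap π V g‖ * ‖x‖ := by rw [hr, mul_comm]; rfl
  -- Hahn-Banach extension and Riesz representation
  have hHB : ∀ g : ((𝓐 × 𝓗) →₀ ℂ), ∃ L : 𝓚 →L[ℂ] ℂ,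
      (∀ x : ↥M, L x = (starRingEnd ℂ) (mf θ (r x) g)) ∧ ‖L‖ ≤ ‖Qmap π V g‖ := by
    intro g
    obtain ⟨L, hL1, hL2⟩ := exists_extension_norm_eq M
      ((ℓ g).mkContinuous ‖Qmap π V g‖ (ℓbound g))
    refine ⟨L, fun x => ?_, ?_⟩
    · rw [hL1 x]
      rfl
    · rw [hL2]
      exact (ℓ g).mkContinuous_norm_le (norm_nonneg _) (ℓbound g)
  choose L hL hLn using hHB
  set w : ((𝓐 × 𝓗) →₀ ℂ) → 𝓚 := fun g => (InnerProductSpace.toDual ℂ 𝓚).symm (L g) with hwdef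
  have hw1 : ∀ g (x : ↥M), (inner ℂ (w g) (x : 𝓚) : ℂ) = (starRingEnd ℂ) (mf θ (r x) g) :=
    fun g x => by rw [hwdef]; exact (InnerProductSpace.toDual_symm_apply).trans (hL g x)
  have hw2 : ∀ g (x : ↥M), (inner ℂ (x : 𝓚) (w g) : ℂ) = mf θ (r x) g := fun g x => by
    rw [← inner_conj_symm, hw1, Complex.conj_conj]
  have hwn : ∀ g, ‖w g‖ ≤ ‖Qmap π V g‖ := fun g => by
    rw [hwdef]
    simp only [LinearIsometryEquiv.norm_map]
    exact hLn g
  have hwQ : ∀ g g', Qmap π V g = Qmap π V g' → w g = w g' := by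
    intro g g' h
    refine hdense.eq_of_inner_right ℂ fun v hv => ?_
    obtain ⟨v, rfl⟩ : ∃ y : ↥M, (y : 𝓚) = v := ⟨⟨v, hv⟩, rfl⟩
    rw [hw2, hw2, wd' _ _ _ h]
  have hwadd : ∀ g g', w (g + g') = w g + w g' := by
    intro g g'
    refine hdense.eq_of_inner_right ℂ fun v hv => ?_
    obtain ⟨v, rfl⟩ : ∃ y : ↥M, (y : 𝓚) = v := ⟨⟨v, hv⟩, rfl⟩
    rw [inner_add_right, hw2, hw2, hw2, mf_add_right]
  have hwsmul : ∀ (c : ℂ) g, w (c • g) = c • w g := by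
    intro c g
    refine hdense.eq_of_inner_right ℂ fun v hv => ?_
    obtain ⟨v, rfl⟩ : ∃ y : ↥M, (y : 𝓚) = v := ⟨⟨v, hv⟩, rfl⟩
    rw [inner_smul_right, hw2, hw2, mf_smul_right]
  -- the operator on M and its extension
  set T0 : ↥M →ₗ[ℂ] 𝓚 :=
    { toFun := fun y => w (r y)
      map_add' := fun y z => by
        rw [hwQ (r (y + z)) (r y + r z) (by rw [map_add, hr, hr, hr, Submodule.coe_add]), hwadd]
      map_smul' := fun c y => by
        rw [hwQ (r (c • y)) (c • r y) (by rw [map_smul, hr, hr, Submodule.coe_smul]), hwsmul]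
        rfl } with hT0
  have hT0b : ∀ y : ↥M, ‖T0 y‖ ≤ 1 * ‖y‖ := fun y => by
    rw [one_mul, hT0]
    simp only [LinearMap.coe_mk, AddHom.coe_mk]
    calc ‖w (r y)‖ ≤ ‖Qmap π V (r y)‖ := hwn _
    _ = ‖y‖ := by rw [hr]; rfl
  set T0c : ↥M →L[ℂ] 𝓚 := T0.mkContinuous 1 hT0b with hT0c
  have hdr : DenseRange ((M.subtypeL : ↥M →L[ℂ] 𝓚)) := by
    simpa [Submodule.range_subtypeL] using hdense.denseRange_val
  set T : 𝓚 →L[ℂ] 𝓚 :=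
    T0c.extend M.subtypeL
    with hT
  have hTM : ∀ y : ↥M, T (y : 𝓚) = w (r y) := fun y => by
    have h1 := ContinuousLinearMap.extend_eq (f := T0c) (e := M.subtypeL) hdr
      (isometry_subtype_coe (s := (M : Set 𝓚))).isUniformInducing y
    rw [hT]
    exact h1
  have hT2 : ∀ x y : ↥M, (inner ℂ (x : 𝓚) (T (y : 𝓚)) : ℂ) = mf θ (r x) (r y) := fun x y => by
    rw [hTM, hw2]
  -- generator identity
  have hgen : ∀ (a b : 𝓐) (h k : 𝓗),
      (inner ℂ (π b (V k)) (T (π a (V h))) : ℂ) = (inner ℂ k (θ (star b * a) h) : ℂ) := by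
    intro a b h k
    have hxm : π b (V k) ∈ M := Submodule.subset_span ⟨b, k, rfl⟩
    have hym : π a (V h) ∈ M := Submodule.subset_span ⟨a, h, rfl⟩
    have h2 := hT2 ⟨_, hxm⟩ ⟨_, hym⟩
    rw [h2, wd _ (Finsupp.single (b, k) 1) _
        (by rw [hr, Qmap_single, one_smul]),
      wd' _ _ (Finsupp.single (a, h) 1)
        (by rw [hr, Qmap_single, one_smul]),
      mf_single]
    simp
  -- equality tool against generators
  have eqK : ∀ u u' : 𝓚, (∀ (b : 𝓐) (k : 𝓗), (inner ℂ (π b (V k)) u : ℂ) = inner ℂ (π b (V k)) u') →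
      u = u' := by
    intro u u' hbk
    have hsp : ∀ v ∈ Submodule.span ℂ {x : 𝓚 | ∃ (a : 𝓐) (h : 𝓗), x = π a (V h)},
        (inner ℂ v u : ℂ) = inner ℂ v u' := by
      intro v hv
      induction hv using Submodule.span_induction with
      | mem y hy => obtain ⟨b, k, rfl⟩ := hy; exact hbk b k
      | zero => rw [inner_zero_left, inner_zero_left]
      | add u1 u2 _ _ h1 h2 => rw [inner_add_left, inner_add_left, h1, h2]
      | smul c u1 _ h1 => rw [inner_smul_left, inner_smul_left, h1]
    refine hdense.eq_of_inner_right ℂ fun v hv => hsp v (hM ▸ hv)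
  -- closure tool for positivity
  have closedPos : ∀ W : 𝓚 →L[ℂ] 𝓚, (∀ x : ↥M, 0 ≤ (inner ℂ (x : 𝓚) (W (x : 𝓚)) : ℂ)) →
      ∀ z : 𝓚, 0 ≤ (inner ℂ z (W z) : ℂ) := by
    intro W hMpos z
    have hcl : IsClosed {z : 𝓚 | 0 ≤ (inner ℂ z (W z) : ℂ)} := by
      have hcont : Continuous fun z : 𝓚 => (inner ℂ z (W z) : ℂ) :=
        continuous_id.inner W.continuous
      have : {z : 𝓚 | 0 ≤ (inner ℂ z (W z) : ℂ)} =
          (fun z : 𝓚 => (inner ℂ z (W z) : ℂ)) ⁻¹' {c : ℂ | 0 ≤ c} := rfl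
      rw [this]
      refine IsClosed.preimage hcont ?_
      have : {c : ℂ | 0 ≤ c} = Complex.re ⁻¹' (Set.Ici 0) ∩ Complex.im ⁻¹' {0} := by
        ext c
        simp only [Set.mem_setOf_eq, Set.mem_inter_iff, Set.mem_preimage, Set.mem_Ici,
          Set.mem_singleton_iff, Complex.nonneg_iff]
        exact ⟨fun h => ⟨h.1, h.2.symm⟩, fun h => ⟨h.1, h.2.symm⟩⟩
      rw [this]
      exact (isClosed_Ici.preimage Complex.continuous_re).inter
        (isClosed_singleton.preimage Complex.continuous_im)
    have hss : (M : Set 𝓚) ⊆ {z : 𝓚 | 0 ≤ (inner ℂ z (W z) : ℂ)} := fun z hz => hMpos ⟨z, hz⟩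
    have := closure_minimal hss hcl
    rw [hdense.closure_eq] at this
    exact this (Set.mem_univ z)
  refine ⟨T, ?_, ?_, ?_, ?_⟩
  · -- commutation
    intro a
    have step1 : ∀ (c : 𝓐) (hh : 𝓗), π a (T (π c (V hh))) = T (π (a * c) (V hh)) := by
      intro c hh
      refine eqK _ _ fun b k => ?_
      have hmove : ∀ z : 𝓚, (inner ℂ (π b (V k)) (π a z) : ℂ) = inner ℂ (π (star a * b) (V k)) z := by
        intro z
        rw [← ContinuousLinearMap.adjoint_inner_left (π a), pi_adj, ← ContinuousLinearMap.mul_apply,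
          ← map_mul]
      rw [hmove, hgen, hgen]
      rw [star_mul, star_star, mul_assoc]
    have hset : ∀ z : 𝓚, π a (T z) = T (π a z) := by
      intro z
      have hcl : IsClosed {z : 𝓚 | π a (T z) = T (π a z)} :=
        isClosed_eq ((π a).continuous.comp T.continuous) (T.continuous.comp (π a).continuous)
      have hss : (M : Set 𝓚) ⊆ {z : 𝓚 | π a (T z) = T (π a z)} := by
        intro z hz
        rw [hM] at hz
        induction hz using Submodule.span_induction with
        | mem y hy =>
          obtain ⟨c, hh, rfl⟩ := hy
          show π a (T (π c (V hh))) = T (π a (π c (V hh)))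
          have hpc : π a (π c (V hh)) = π (a * c) (V hh) := by
            rw [← ContinuousLinearMap.mul_apply, ← map_mul]
          rw [hpc, step1]
        | zero => show π a (T 0) = T (π a 0); simp
        | add u1 u2 _ _ h1 h2 =>
          show π a (T (u1 + u2)) = T (π a (u1 + u2))
          rw [map_add, map_add, map_add, map_add]
          rw [h1, h2]
        | smul c u1 _ h1 =>
          show π a (T (c • u1)) = T (π a (c • u1))
          rw [map_smul, map_smul, map_smul, map_smul, h1]
      have := closure_minimal hss hcl
      rw [hdense.closure_eq] at this
      exact this (Set.mem_univ z)
    exact ContinuousLinearMap.ext fun z => by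
      rw [ContinuousLinearMap.mul_apply, ContinuousLinearMap.mul_apply, hset]
  · -- 0 ≤ T
    rw [op_nonneg_iff]
    refine closedPos T fun x => ?_
    rw [hT2 x x]
    exact mf_nonneg hθ _
  · -- T ≤ 1
    have h1 : (0 : 𝓚 →L[ℂ] 𝓚) ≤ 1 - T := by
      rw [op_nonneg_iff]
      refine closedPos (1 - T) fun x => ?_
      rw [ContinuousLinearMap.sub_apply, ContinuousLinearMap.one_apply, inner_sub_right, hT2 x x]
      have hxx : (inner ℂ (x : 𝓚) (x : 𝓚) : ℂ) = mf φ (r x) (r x) := by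
        rw [mf_phi hrep, hr]
      rw [hxx]
      have := mf_nonneg hsub (r x)
      rwa [mf_theta_sub] at this
    have h2 := (ContinuousLinearMap.nonneg_iff_isPositive (1 - T)).mp h1
    rw [ContinuousLinearMap.le_def]
    exact h2
  · -- the Radon-Nikodym property
    refine LinearMap.ext fun a => ContinuousLinearMap.ext fun h => ?_
    refine ext_inner_left ℂ fun k => ?_
    show (inner ℂ k ((ContinuousLinearMap.adjoint V ∘L (π a ∘L (T ∘L V))) h) : ℂ) = inner ℂ k (θ a h)
    simp only [ContinuousLinearMap.coe_comp', Function.comp_apply]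
    rw [ContinuousLinearMap.adjoint_inner_right]
    have hmove : (inner ℂ (V k) (π a (T (V h))) : ℂ) = inner ℂ (π (star a) (V k)) (T (V h)) := by
      rw [← ContinuousLinearMap.adjoint_inner_left (π a), pi_adj]
    rw [hmove]
    have hVh : V h = π 1 (V h) := by rw [map_one, ContinuousLinearMap.one_apply]
    rw [hVh, hgen, star_star, mul_one]

lemma srn_apply (π : 𝓐 →⋆ₐ[ℂ] (𝓚 →L[ℂ] 𝓚)) (V : 𝓗 →L[ℂ] 𝓚) (T : 𝓚 →L[ℂ] 𝓚) (a : 𝓐) (h : 𝓗) :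
    stinespringRN π V T a h = ContinuousLinearMap.adjoint V (π a (T (V h))) := rfl

lemma cp_of {π : 𝓐 →⋆ₐ[ℂ] (𝓚 →L[ℂ] 𝓚)} {V : 𝓗 →L[ℂ] 𝓚} {T : 𝓚 →L[ℂ] 𝓚}
    (hcomm : ∀ a : 𝓐, Commute (π a) T) (hpos : 0 ≤ T) :
    IsCPMap (stinespringRN π V T) := by
  intro n a b
  rw [op_nonneg_iff]
  intro h
  set k : Fin n → 𝓚 := fun i => π (a i) (V (b i h)) with hk
  have hterm : ∀ i j : Fin n,
      (inner ℂ h ((star (b i) * stinespringRN π V T (star (a i) * a j) * b j) h) : ℂ)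
      = (inner ℂ (k i) (T (k j)) : ℂ) := by
    intro i j
    rw [ContinuousLinearMap.mul_apply, ContinuousLinearMap.mul_apply,
      ContinuousLinearMap.star_eq_adjoint, ContinuousLinearMap.adjoint_inner_right,
      srn_apply, ContinuousLinearMap.adjoint_inner_right, map_mul,
      ContinuousLinearMap.mul_apply, ← pi_adj, ContinuousLinearMap.adjoint_inner_right]
    have hc : π (a j) (T (V (b j h))) = T (π (a j) (V (b j h))) := by
      rw [← ContinuousLinearMap.mul_apply, ← ContinuousLinearMap.mul_apply, (hcomm (a j)).eq]
    rw [hc, hk]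
  calc (0:ℂ) ≤ (inner ℂ (∑ i, k i) (T (∑ j, k j)) : ℂ) := (op_nonneg_iff T).mp hpos _
  _ = ∑ i, ∑ j, (inner ℂ (k i) (T (k j)) : ℂ) := by
    rw [map_sum, sum_inner]
    refine Finset.sum_congr rfl fun i _ => ?_
    rw [inner_sum]
  _ = _ := by
    rw [ContinuousLinearMap.sum_apply, inner_sum]
    refine Finset.sum_congr rfl fun i _ => ?_
    rw [ContinuousLinearMap.sum_apply, inner_sum]
    exact Finset.sum_congr rfl fun j _ => (hterm i j).symm

lemma srn_sub (π : 𝓐 →⋆ₐ[ℂ] (𝓚 →L[ℂ] 𝓚)) (V : 𝓗 →L[ℂ] 𝓚) (T₁ T₂ : 𝓚 →L[ℂ] 𝓚) :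
    stinespringRN π V T₂ - stinespringRN π V T₁ = stinespringRN π V (T₂ - T₁) := by
  refine LinearMap.ext fun a => ContinuousLinearMap.ext fun h => ?_
  simp only [LinearMap.sub_apply, ContinuousLinearMap.sub_apply, srn_apply,
    ContinuousLinearMap.coe_sub', Pi.sub_apply, map_sub]

lemma srn_one_sub {φ : 𝓐 →ₗ[ℂ] (𝓗 →L[ℂ] 𝓗)} {π : 𝓐 →⋆ₐ[ℂ] (𝓚 →L[ℂ] 𝓚)} {V : 𝓗 →L[ℂ] 𝓚}
    (hrep : ∀ a : 𝓐, φ a = ContinuousLinearMap.adjoint V ∘L (π a ∘L V)) (T : 𝓚 →L[ℂ] 𝓚) :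
    φ - stinespringRN π V T = stinespringRN π V (1 - T) := by
  refine LinearMap.ext fun a => ContinuousLinearMap.ext fun h => ?_
  simp only [LinearMap.sub_apply, ContinuousLinearMap.sub_apply, srn_apply, hrep a,
    ContinuousLinearMap.coe_comp', Function.comp_apply, ContinuousLinearMap.coe_sub',
    Pi.sub_apply, ContinuousLinearMap.one_apply, map_sub]

lemma cp_zero : IsCPMap (0 : 𝓐 →ₗ[ℂ] (𝓗 →L[ℂ] 𝓗)) := by
  intro n a b
  simp

lemma nonneg_of_cp {π : 𝓐 →⋆ₐ[ℂ] (𝓚 →L[ℂ] 𝓚)} {V : 𝓗 →L[ℂ] 𝓚}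
    (hdense : Dense ((Submodule.span ℂ {x : 𝓚 | ∃ (a : 𝓐) (h : 𝓗), x = π a (V h)} :
      Submodule ℂ 𝓚) : Set 𝓚))
    {D : 𝓚 →L[ℂ] 𝓚} (hcomm : ∀ a : 𝓐, Commute (π a) D)
    (hcp : IsCPMap (stinespringRN π V D)) : 0 ≤ D := by
  rw [op_nonneg_iff]
  have hcl : IsClosed {z : 𝓚 | 0 ≤ (inner ℂ z (D z) : ℂ)} := by
    have hcont : Continuous fun z : 𝓚 => (inner ℂ z (D z) : ℂ) :=
      continuous_id.inner D.continuous
    have hrw : {z : 𝓚 | 0 ≤ (inner ℂ z (D z) : ℂ)} =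
        (fun z : 𝓚 => (inner ℂ z (D z) : ℂ)) ⁻¹' (Complex.re ⁻¹' (Set.Ici 0) ∩ Complex.im ⁻¹' {0}) := by
      ext c
      simp only [Set.mem_setOf_eq, Set.mem_preimage, Set.mem_inter_iff, Set.mem_Ici,
        Set.mem_singleton_iff, Complex.nonneg_iff]
      exact ⟨fun h => ⟨h.1, h.2.symm⟩, fun h => ⟨h.1, h.2.symm⟩⟩
    rw [hrw]
    exact IsClosed.preimage hcont ((isClosed_Ici.preimage Complex.continuous_re).inter
      (isClosed_singleton.preimage Complex.continuous_im))
  have hss : ((Submodule.span ℂ {x : 𝓚 | ∃ (a : 𝓐) (h : 𝓗), x = π a (V h)} :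
      Submodule ℂ 𝓚) : Set 𝓚) ⊆ {z : 𝓚 | 0 ≤ (inner ℂ z (D z) : ℂ)} := by
    intro z hz
    obtain ⟨n, a, h, rfl⟩ := span_rep hz
    show (0:ℂ) ≤ inner ℂ (∑ i, π (a i) (V (h i))) (D (∑ i, π (a i) (V (h i))))
    have hterm : ∀ i j : Fin n,
        (inner ℂ (π (a i) (V (h i))) (D (π (a j) (V (h j)))) : ℂ)
        = (inner ℂ (h i) (stinespringRN π V D (star (a i) * a j) (h j)) : ℂ) := by
      intro i j
      have hc : D (π (a j) (V (h j))) = π (a j) (D (V (h j))) := by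
        rw [← ContinuousLinearMap.mul_apply, ← ContinuousLinearMap.mul_apply, ← (hcomm (a j)).eq]
      rw [hc, srn_apply, ContinuousLinearMap.adjoint_inner_right, map_mul,
        ContinuousLinearMap.mul_apply, ← pi_adj, ContinuousLinearMap.adjoint_inner_right]
    calc (0:ℂ) ≤ ∑ i, ∑ j, (inner ℂ (h i) (stinespringRN π V D (star (a i) * a j) (h j)) : ℂ) :=
      cp_inner hcp n a h
    _ = _ := by
      rw [map_sum, sum_inner]
      refine Finset.sum_congr rfl fun i _ => ?_
      rw [inner_sum]
      exact Finset.sum_congr rfl fun j _ => (hterm i j).symm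
  intro z
  have := closure_minimal hss hcl
  rw [hdense.closure_eq] at this
  exact this (Set.mem_univ z)

end RNaux

end RNAuxSec

/-- **Arveson's Radon–Nikodym theorem**: `T ↦ φ_T = V* π(·) T V` is an affine order
isomorphism from `{T ∈ π(A)' : 0 ≤ T ≤ 1}` onto `[0, φ]`. -/
theorem stinespring_radonNikodym {A H K : Type*} [CStarAlgebra A]
    [NormedAddCommGroup H] [InnerProductSpace ℂ H] [CompleteSpace H]
    [NormedAddCommGroup K] [InnerProductSpace ℂ K] [CompleteSpace K]
    (φ : A →ₗ[ℂ] (H →L[ℂ] H)) (hφ : IsCPMap φ)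
    (π : A →⋆ₐ[ℂ] (K →L[ℂ] K)) (V : H →L[ℂ] K)
    (hmin : IsMinimalStinespring φ π V) :
    Set.BijOn (stinespringRN π V)
      {T : K →L[ℂ] K | (∀ a : A, Commute (π a) T) ∧ 0 ≤ T ∧ T ≤ 1} (CPBelow φ) ∧
    (∀ T₁ ∈ {T : K →L[ℂ] K | (∀ a : A, Commute (π a) T) ∧ 0 ≤ T ∧ T ≤ 1},
      ∀ T₂ ∈ {T : K →L[ℂ] K | (∀ a : A, Commute (π a) T) ∧ 0 ≤ T ∧ T ≤ 1},
        (T₁ ≤ T₂ ↔ IsCPMap (stinespringRN π V T₂ - stinespringRN π V T₁))) ∧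
    (∀ (T₁ T₂ : K →L[ℂ] K) (t : ℝ), 0 ≤ t → t ≤ 1 →
      stinespringRN π V ((t : ℂ) • T₁ + (((1 - t : ℝ)) : ℂ) • T₂) =
        (t : ℂ) • stinespringRN π V T₁ + (((1 - t : ℝ)) : ℂ) • stinespringRN π V T₂) := by
  classical
  obtain ⟨hrep, hdense⟩ := hmin
  have hord : ∀ T₁ ∈ {T : K →L[ℂ] K | (∀ a : A, Commute (π a) T) ∧ 0 ≤ T ∧ T ≤ 1},
      ∀ T₂ ∈ {T : K →L[ℂ] K | (∀ a : A, Commute (π a) T) ∧ 0 ≤ T ∧ T ≤ 1},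
        (T₁ ≤ T₂ ↔ IsCPMap (stinespringRN π V T₂ - stinespringRN π V T₁)) := by
    intro T₁ h₁ T₂ h₂
    constructor
    · intro hle
      rw [RNaux.srn_sub]
      refine RNaux.cp_of (fun a => (h₂.1 a).sub_right (h₁.1 a)) ?_
      exact (ContinuousLinearMap.nonneg_iff_isPositive _).mpr
        ((ContinuousLinearMap.le_def T₁ T₂).mp hle)
    · intro hcp
      rw [RNaux.srn_sub] at hcp
      have h0 := RNaux.nonneg_of_cp hdense (fun a => (h₂.1 a).sub_right (h₁.1 a)) hcp
      rw [ContinuousLinearMap.le_def T₁ T₂]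
      exact (ContinuousLinearMap.nonneg_iff_isPositive _).mp h0
  refine ⟨⟨?_, ?_, ?_⟩, hord, ?_⟩
  · intro T hT
    refine ⟨RNaux.cp_of hT.1 hT.2.1, ?_⟩
    rw [RNaux.srn_one_sub hrep]
    refine RNaux.cp_of (fun a => ((Commute.one_right (π a)).sub_right (hT.1 a))) ?_
    exact (ContinuousLinearMap.nonneg_iff_isPositive _).mpr
      ((ContinuousLinearMap.le_def T 1).mp hT.2.2)
  · intro T₁ h₁ T₂ h₂ heq
    have c1 : IsCPMap (stinespringRN π V T₂ - stinespringRN π V T₁) := by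
      rw [heq, sub_self]
      exact RNaux.cp_zero
    have c2 : IsCPMap (stinespringRN π V T₁ - stinespringRN π V T₂) := by
      rw [heq, sub_self]
      exact RNaux.cp_zero
    exact le_antisymm ((hord T₁ h₁ T₂ h₂).mpr c1) ((hord T₂ h₂ T₁ h₁).mpr c2)
  · intro θ hθ
    obtain ⟨T, hc, hp, hl, heq⟩ := RNaux.surj hrep hdense hθ.1 hθ.2
    exact ⟨T, ⟨hc, hp, hl⟩, heq⟩
  · intro T₁ T₂ t _ _
    refine LinearMap.ext fun a => ContinuousLinearMap.ext fun h => ?_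
    simp only [LinearMap.add_apply, LinearMap.smul_apply, ContinuousLinearMap.add_apply,
      ContinuousLinearMap.smul_apply, RNaux.srn_apply, ContinuousLinearMap.coe_smul',
      Pi.smul_apply, ContinuousLinearMap.coe_add', Pi.add_apply, map_add, map_smul]
end
end

section
/- If (σ₁, e₁, X₁) and (σ₂, e₂, X₂) are two Paschke dilations of the same completely positive map φ : A → B (i.e., φ(a) = ⟨σᵢ(a)eᵢ, eᵢ⟩ and {σᵢ(a)(eᵢb)} has dense span in Xᵢ), then there exists a Hilbert module isomorphism W : X₁ → X₂ with We₁ = e₂ and Wσ₁(a)W* = σ₂(a) for all a ∈ A. -/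
open scoped ComplexOrder
open ContinuousLinearMap MulOpposite

noncomputable section

variable {G A H K : Type*} [Group G] [CStarAlgebra A]
  [NormedAddCommGroup H] [InnerProductSpace ℂ H] [CompleteSpace H]
  [NormedAddCommGroup K] [InnerProductSpace ℂ K] [CompleteSpace K]

set_option linter.unusedSectionVars false
set_option maxHeartbeats 1000000

namespace PUAux
variable {B : Type*} [CStarAlgebra B] [PartialOrder B] [StarOrderedRing B]
variable {X : Type*} [AddCommGroup X] [Module ℂ X] [Module Bᵐᵒᵖ X]
variable {ip : X → X → B}

section Basic
variable (hM : IsPreHilbertModule ip)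
include hM

lemma ip_add_right (x y z : X) : ip x (y + z) = ip x y + ip x z := by
  rw [hM.star_inner, hM.add_left, star_add, ← hM.star_inner, ← hM.star_inner]
lemma ip_zero_left (y : X) : ip 0 y = 0 := by
  have h := hM.add_left 0 0 y; rw [add_zero] at h; exact (left_eq_add.mp h)
lemma ip_zero_right (x : X) : ip x 0 = 0 := by
  rw [hM.star_inner, ip_zero_left hM, star_zero]
lemma ip_neg_left (x y : X) : ip (-x) y = - ip x y := by
  have h := hM.add_left x (-x) y
  rw [add_neg_cancel, ip_zero_left hM] at h
  exact (neg_eq_of_add_eq_zero_right h.symm).symm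
lemma ip_neg_right (x y : X) : ip x (-y) = - ip x y := by
  rw [hM.star_inner, ip_neg_left hM, star_neg, ← hM.star_inner]
lemma ip_sub_left (x y z : X) : ip (x - y) z = ip x z - ip y z := by
  rw [sub_eq_add_neg, hM.add_left, ip_neg_left hM, sub_eq_add_neg]
lemma ip_sub_right (x y z : X) : ip x (y - z) = ip x y - ip x z := by
  rw [sub_eq_add_neg, ip_add_right hM, ip_neg_right hM, sub_eq_add_neg]
lemma ip_smul_right (b : B) (x y : X) : ip x (op b • y) = star b * ip x y := by
  rw [hM.star_inner, hM.smul_left, star_mul, ← hM.star_inner]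
lemma ip_self_nonneg (x : X) : (0 : B) ≤ ip x x := by
  obtain ⟨c, hc⟩ := hM.pos x; rw [hc]; exact star_mul_self_nonneg c
lemma ip_self_selfAdjoint (x : X) : IsSelfAdjoint (ip x x) := (hM.star_inner x x).symm

/-- Cauchy–Schwarz. -/
lemma ip_cs (x y : X) : ‖ip x y‖ ^ 2 ≤ ‖ip x x‖ * ‖ip y y‖ := by
  by_cases hx : ip x x = 0
  · have hx0 : x = 0 := hM.definite x hx
    subst hx0
    simp [ip_zero_left hM]
  · set t : ℝ := ‖ip x x‖ with ht
    have htpos : 0 < t := norm_pos_iff.mpr hx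
    set c : B := ip x y with hc
    set b : B := ((t : ℂ))⁻¹ • star c with hb
    have hsb : star b = ((t : ℂ))⁻¹ • c := by
      rw [hb, star_smul, star_star, hc]
      congr 1
      simp [Complex.ext_iff]
    have t11 : ip (op b • x) (op b • x) = star b * ip x x * b := by
      rw [hM.smul_left, ip_smul_right hM, mul_assoc]
    have t12 : ip (op b • x) y = c * b := by rw [hM.smul_left, hc]
    have t21 : ip y (op b • x) = star (c * b) := by rw [hM.star_inner, t12]
    have e1 : ip (op b • x - y) (op b • x - y)
        = star b * ip x x * b - (c * b) - star (c * b) + ip y y := by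
      rw [ip_sub_left hM, ip_sub_right hM, ip_sub_right hM, t11, t12, t21]
      abel
    have hcb : c * b = ((t : ℂ))⁻¹ • (c * star c) := by rw [hb, mul_smul_comm]
    have hscb : star (c * b) = ((t : ℂ))⁻¹ • (c * star c) := by
      rw [hcb, star_smul, star_mul, star_star]
      congr 1
      simp [Complex.ext_iff]
    have h2 : star b * ip x x * b ≤ ((t : ℂ))⁻¹ • (c * star c) := by
      have hle : ip x x ≤ algebraMap ℝ B t :=
        IsSelfAdjoint.le_algebraMap_norm_self (ip_self_selfAdjoint hM x)
      have h2' := star_left_conjugate_le_conjugate hle b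
      have halg : algebraMap ℝ B t = ((t:ℝ):ℂ) • (1:B) := by
        rw [Algebra.algebraMap_eq_smul_one]
        exact (algebraMap_smul ℂ t (1:B)).symm
      have htne : ((t:ℝ) : ℂ) ≠ 0 := by exact_mod_cast htpos.ne'
      have hrhs : star b * algebraMap ℝ B t * b = ((t : ℂ))⁻¹ • (c * star c) := by
        rw [hsb, hb, halg]
        simp only [smul_mul_assoc, mul_smul_comm, smul_smul, mul_one]
        rw [show ((t:ℂ))⁻¹ * (t * (t:ℂ)⁻¹) = ((t:ℂ))⁻¹ by field_simp]
      rwa [hrhs] at h2'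
    have key : (0:B) ≤ ip (op b • x - y) (op b • x - y) := ip_self_nonneg hM _
    have h3 : ((t : ℂ))⁻¹ • (c * star c) ≤ ip y y := by
      rw [e1] at key
      rw [hscb, hcb] at key
      have key2 : (0:B) ≤ ip y y - ((t : ℂ))⁻¹ • (c * star c) := by
        calc (0:B) ≤ star b * ip x x * b - ((t : ℂ))⁻¹ • (c * star c)
            - ((t : ℂ))⁻¹ • (c * star c) + ip y y := key
          _ ≤ ((t : ℂ))⁻¹ • (c * star c) - ((t : ℂ))⁻¹ • (c * star c)
            - ((t : ℂ))⁻¹ • (c * star c) + ip y y := by gcongr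
          _ = ip y y - ((t : ℂ))⁻¹ • (c * star c) := by abel
      exact sub_nonneg.mp key2
    have hnn : (0:B) ≤ ((t : ℂ))⁻¹ • (c * star c) := by
      have hsq : ((Real.sqrt t⁻¹ : ℝ) : ℂ) * ((Real.sqrt t⁻¹ : ℝ) : ℂ) = ((t : ℂ))⁻¹ := by
        rw [← Complex.ofReal_mul, Real.mul_self_sqrt (by positivity)]
        push_cast; ring
      have : ((t : ℂ))⁻¹ • (c * star c)
          = star (((Real.sqrt t⁻¹ : ℝ) : ℂ) • star c) * (((Real.sqrt t⁻¹ : ℝ) : ℂ) • star c) := by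
        rw [star_smul, star_star, smul_mul_smul_comm]
        rw [show star ((Real.sqrt t⁻¹ : ℝ) : ℂ) = ((Real.sqrt t⁻¹ : ℝ) : ℂ) from
          Complex.conj_ofReal _, hsq]
      rw [this]; exact star_mul_self_nonneg _
    have h4 : ‖((t : ℂ))⁻¹ • (c * star c)‖ ≤ ‖ip y y‖ :=
      CStarAlgebra.norm_le_norm_of_nonneg_of_le hnn h3
    have h5 : ‖((t : ℂ))⁻¹ • (c * star c)‖ = t⁻¹ * (‖c‖ * ‖c‖) := by
      rw [norm_smul, CStarRing.norm_self_mul_star]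
      congr 1
      rw [norm_inv, Complex.norm_real, Real.norm_eq_abs, abs_of_pos htpos]
    rw [h5] at h4
    rw [pow_two]
    calc ‖c‖ * ‖c‖ = t * (t⁻¹ * (‖c‖ * ‖c‖)) := by field_simp
      _ ≤ t * ‖ip y y‖ := by
          exact mul_le_mul_of_nonneg_left h4 htpos.le

end Basic

/-- The seminorm induced by the `B`-valued inner product. -/
def eN (ip : X → X → B) (x : X) : ℝ := Real.sqrt ‖ip x x‖

section NLemmas
variable (hM : IsPreHilbertModule ip)

lemma eN_nonneg (x : X) : 0 ≤ eN ip x := Real.sqrt_nonneg _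

lemma eN_sq (x : X) : ‖ip x x‖ = eN ip x ^ 2 := by
  rw [eN, Real.sq_sqrt (norm_nonneg _)]

include hM

lemma ip_norm_le (x y : X) : ‖ip x y‖ ≤ eN ip x * eN ip y := by
  have h := ip_cs hM x y
  have h2 : Real.sqrt (‖ip x y‖ ^ 2) ≤ Real.sqrt (‖ip x x‖ * ‖ip y y‖) :=
    Real.sqrt_le_sqrt h
  rwa [Real.sqrt_sq (norm_nonneg _), Real.sqrt_mul (norm_nonneg _)] at h2

lemma eN_zero : eN ip (0 : X) = 0 := by
  rw [eN, ip_zero_left hM, norm_zero, Real.sqrt_zero]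

lemma eN_eq_zero (x : X) (h : eN ip x = 0) : x = 0 := by
  apply hM.definite
  have : ‖ip x x‖ = 0 := by
    have := eN_sq (ip := ip) x
    rw [h] at this; simpa using this
  exact norm_eq_zero.mp this

lemma eN_add (x y : X) : eN ip (x + y) ≤ eN ip x + eN ip y := by
  have expand : ip (x + y) (x + y) = ip x x + ip x y + ip y x + ip y y := by
    rw [hM.add_left, ip_add_right hM, ip_add_right hM]; abel
  have h1 : ‖ip (x+y) (x+y)‖ ≤ (eN ip x + eN ip y) ^ 2 := by
    calc ‖ip (x+y) (x+y)‖ ≤ ‖ip x x‖ + ‖ip x y‖ + ‖ip y x‖ + ‖ip y y‖ := by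
          rw [expand]
          refine (norm_add_le _ _).trans ?_
          gcongr
          refine (norm_add_le _ _).trans ?_
          gcongr
          exact norm_add_le _ _
      _ ≤ eN ip x ^ 2 + eN ip x * eN ip y + eN ip y * eN ip x + eN ip y ^ 2 := by
          gcongr
          · rw [eN_sq]
          · exact ip_norm_le hM x y
          · exact ip_norm_le hM y x
          · rw [eN_sq]
      _ = (eN ip x + eN ip y) ^ 2 := by ring
  have h2 := Real.sqrt_le_sqrt h1
  rwa [Real.sqrt_sq (add_nonneg (eN_nonneg (ip := ip) x) (eN_nonneg (ip := ip) y))] at h2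

lemma eN_neg (x : X) : eN ip (-x) = eN ip x := by
  rw [eN, eN, ip_neg_left hM, ip_neg_right hM, neg_neg]

lemma eN_sub_comm (x y : X) : eN ip (x - y) = eN ip (y - x) := by
  rw [← eN_neg hM (x - y), neg_sub]

lemma eN_sub_le (x y z : X) : eN ip (x - z) ≤ eN ip (x - y) + eN ip (y - z) := by
  have : x - z = (x - y) + (y - z) := by abel
  rw [this]; exact eN_add hM _ _

lemma eN_opsmul (b : B) (x : X) : eN ip (op b • x) ≤ ‖b‖ * eN ip x := by
  have h : ‖ip (op b • x) (op b • x)‖ ≤ ‖b‖ ^ 2 * ‖ip x x‖ := by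
    rw [hM.smul_left, ip_smul_right hM]
    calc ‖star b * ip x x * b‖ ≤ ‖star b * ip x x‖ * ‖b‖ := norm_mul_le _ _
      _ ≤ ‖star b‖ * ‖ip x x‖ * ‖b‖ := by gcongr; exact norm_mul_le _ _
      _ = ‖b‖ ^ 2 * ‖ip x x‖ := by rw [norm_star]; ring
  have h2 := Real.sqrt_le_sqrt h
  rw [Real.sqrt_mul (by positivity), Real.sqrt_sq (norm_nonneg _)] at h2
  exact h2

lemma eN_smallness {z : X} (h : ∀ ε : ℝ, 0 < ε → eN ip z < ε) : z = 0 := by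
  apply eN_eq_zero hM
  rcases le_or_gt (eN ip z) 0 with h0 | h0
  · exact le_antisymm h0 (eN_nonneg z)
  · exact absurd (h _ h0) (lt_irrefl _)

lemma eN_le_add (x u : X) : eN ip u ≤ eN ip x + eN ip (x - u) := by
  have h : u = x - (x - u) := by abel
  calc eN ip u = eN ip (x + -(x - u)) := by rw [← sub_eq_add_neg, ← h]
    _ ≤ eN ip x + eN ip (-(x - u)) := eN_add hM x _
    _ = eN ip x + eN ip (x - u) := by rw [eN_neg hM]

lemma ip_diff_bound (x y u v : X) : ‖ip x y - ip u v‖ ≤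
    eN ip (x - u) * eN ip y + (eN ip x + eN ip (x - u)) * eN ip (y - v) := by
  have hid : ip x y - ip u v = ip (x - u) y + ip u (y - v) := by
    rw [ip_sub_left hM, ip_sub_right hM]; abel
  rw [hid]
  calc ‖ip (x - u) y + ip u (y - v)‖ ≤ ‖ip (x - u) y‖ + ‖ip u (y - v)‖ := norm_add_le _ _
    _ ≤ eN ip (x - u) * eN ip y + eN ip u * eN ip (y - v) := by
        gcongr <;> [exact ip_norm_le hM _ _; exact ip_norm_le hM _ _]
    _ ≤ eN ip (x - u) * eN ip y + (eN ip x + eN ip (x - u)) * eN ip (y - v) := by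
        gcongr
        · exact eN_nonneg _
        · exact eN_le_add hM x u

end NLemmas

section Dilation

variable {A : Type*} [CStarAlgebra A] {φ : A →ₗ[ℂ] B} {σ : A → X → X} {e : X}

/-- Sum of the generators `σ a (op b • e)` over a list of pairs. -/
def PhiL (σ : A → X → X) (e : X) (L : List (A × B)) : X :=
  (L.map fun p => σ p.1 (op p.2 • e)).sum

/-- The Gram form of two lists of pairs, depending only on `φ`. -/
def gamL (φ : A →ₗ[ℂ] B) (L M : List (A × B)) : B :=
  (L.map fun p => (M.map fun q => star q.2 * φ (star q.1 * p.1) * p.2).sum).sum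

/-- Convergence of the partial sums described by `L` to `x`. -/
def ConvTo (ip : X → X → B) (σ : A → X → X) (e : X) (x : X) (L : ℕ → List (A × B)) : Prop :=
  ∀ ε : ℝ, 0 < ε → ∃ K : ℕ, ∀ k ≥ K, eN ip (x - PhiL σ e (L k)) < ε

@[simp] lemma PhiL_nil : PhiL σ e ([] : List (A × B)) = 0 := rfl

@[simp] lemma PhiL_cons (p : A × B) (L : List (A × B)) :
    PhiL σ e (p :: L) = σ p.1 (op p.2 • e) + PhiL σ e L := by simp [PhiL]

@[simp] lemma PhiL_append (L M : List (A × B)) :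
    PhiL σ e (L ++ M) = PhiL σ e L + PhiL σ e M := by simp [PhiL]

variable (hd : IsPaschkeDilation ip σ e ⇑φ)
include hd

lemma sg_add (a : A) (x y : X) : σ a (x + y) = σ a x + σ a y := (hd.2.2.1.1 a).1 x y

lemma sg_zero (a : A) : σ a 0 = 0 := by
  have h := sg_add hd a 0 0
  rw [add_zero] at h
  exact (left_eq_add.mp h)

lemma sg_neg (a : A) (x : X) : σ a (-x) = - σ a x := by
  have h := sg_add hd a x (-x)
  rw [add_neg_cancel, sg_zero hd] at h
  exact (neg_eq_of_add_eq_zero_right h.symm).symm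

lemma sg_sub (a : A) (x y : X) : σ a (x - y) = σ a x - σ a y := by
  rw [sub_eq_add_neg, sg_add hd, sg_neg hd, sub_eq_add_neg]

lemma sgA_zero (x : X) : σ 0 x = 0 := by
  have h := hd.2.2.1.2.2.2.1 (0 : ℂ) 0 x
  rw [zero_smul, zero_smul] at h
  exact h

lemma sgA_neg (a : A) (x : X) : σ (-a) x = - σ a x := by
  have h := hd.2.2.1.2.2.1 a (-a) x
  rw [add_neg_cancel, sgA_zero hd] at h
  exact (neg_eq_of_add_eq_zero_right h.symm).symm

lemma gen_ip (a a' : A) (b b' : B) :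
    ip (σ a (op b • e)) (σ a' (op b' • e)) = star b' * φ (star a' * a) * b := by
  have hM := hd.1
  have hinner : φ (star a' * a) = ip (σ a e) (σ a' e) := by
    rw [hd.2.2.2.1, hd.2.2.1.2.2.2.2.1, hd.2.2.1.2.2.2.2.2, star_star]
  rw [hd.2.2.1.2.1 a b e, hd.2.2.1.2.1 a' b' e, hM.smul_left, ip_smul_right hM, ← hinner,
    mul_assoc]

lemma gen_PhiL_ip (a : A) (b : B) (M : List (A × B)) :
    ip (σ a (op b • e)) (PhiL σ e M) = (M.map fun q => star q.2 * φ (star q.1 * a) * b).sum := by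
  have hM := hd.1
  induction M with
  | nil => simpa using ip_zero_right hM _
  | cons q M ih => rw [PhiL_cons, ip_add_right hM, gen_ip hd, ih]; simp

lemma PhiL_ip (L M : List (A × B)) : ip (PhiL σ e L) (PhiL σ e M) = gamL φ L M := by
  have hM := hd.1
  induction L with
  | nil => simpa [gamL] using ip_zero_left hM _
  | cons p L ih => rw [PhiL_cons, hM.add_left, gen_PhiL_ip hd, ih]; simp [gamL]

lemma span_list :
    ∀ y ∈ Submodule.span ℂ {z : X | ∃ (a : A) (b : B), z = σ a (op b • e)},
      ∃ L : List (A × B), PhiL σ e L = y := by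
  set S : Set X := {z : X | ∃ (a : A) (b : B), z = σ a (op b • e)} with hSdef
  have hsmul : ∀ (c : ℂ), ∀ z ∈ S, c • z ∈ S := by
    rintro c z ⟨a, b, rfl⟩
    exact ⟨c • a, b, (hd.2.2.1.2.2.2.1 c a _).symm⟩
  have hclos : ∀ y ∈ Submodule.span ℂ S, y ∈ AddSubmonoid.closure S := by
    intro y hy
    induction hy using Submodule.span_induction with
    | mem z hz => exact AddSubmonoid.subset_closure hz
    | zero => exact zero_mem _
    | add u v hu hv ihu ihv => exact add_mem ihu ihv
    | smul c u hu ihu =>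
      clear hu
      induction ihu using AddSubmonoid.closure_induction with
      | mem z hz => exact AddSubmonoid.subset_closure (hsmul c z hz)
      | zero => rw [smul_zero]; exact zero_mem _
      | add u v hu' hv' ihu' ihv' => rw [smul_add]; exact add_mem ihu' ihv'
  intro y hy
  obtain ⟨l, hl, hsum⟩ := AddSubmonoid.exists_list_of_mem_closure (hclos y hy)
  subst hsum
  clear hy
  induction l with
  | nil => exact ⟨[], rfl⟩
  | cons z l ih =>
    obtain ⟨a, b, hz⟩ := hl z List.mem_cons_self
    obtain ⟨L, hL⟩ := ih (fun w hw => hl w (List.mem_cons_of_mem z hw))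
    exact ⟨(a, b) :: L, by rw [PhiL_cons, hL, hz, List.sum_cons]⟩

lemma approx (x : X) : ∀ ε : ℝ, 0 < ε → ∃ L : List (A × B), eN ip (x - PhiL σ e L) < ε := by
  intro ε hε
  obtain ⟨y, hy, hylt⟩ := hd.2.2.2.2 x (ε ^ 2) (by positivity)
  obtain ⟨L, rfl⟩ := span_list hd y hy
  exact ⟨L, (Real.sqrt_lt' hε).mpr hylt⟩

lemma approxSeq (x : X) : ∃ L : ℕ → List (A × B), ConvTo ip σ e x L := by
  choose L hL using fun k : ℕ => approx hd x (1 / (k + 1)) (by positivity)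
  refine ⟨L, fun ε hε => ?_⟩
  obtain ⟨K, hK⟩ := exists_nat_gt (1 / ε)
  refine ⟨K, fun k hk => lt_trans (hL k) ?_⟩
  rw [div_lt_iff₀ (by positivity)]
  rw [div_lt_iff₀ hε] at hK
  have hkK : (K : ℝ) ≤ (k : ℝ) := by exact_mod_cast hk
  nlinarith [hε.le]

lemma conv_unique {x y : X} {L : ℕ → List (A × B)}
    (hx : ConvTo ip σ e x L) (hy : ConvTo ip σ e y L) : x = y := by
  have hM := hd.1
  rw [← sub_eq_zero]
  apply eN_smallness hM
  intro ε hε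
  obtain ⟨K₁, hK₁⟩ := hx (ε / 2) (by positivity)
  obtain ⟨K₂, hK₂⟩ := hy (ε / 2) (by positivity)
  have h1 := hK₁ (max K₁ K₂) (le_max_left _ _)
  have h2 := hK₂ (max K₁ K₂) (le_max_right _ _)
  have h3 := eN_sub_le hM x (PhiL σ e (L (max K₁ K₂))) y
  rw [eN_sub_comm hM (PhiL σ e (L (max K₁ K₂))) y] at h3
  linarith

lemma complete_conv {L : ℕ → List (A × B)}
    (hcau : ∀ ε : ℝ, 0 < ε → ∃ K, ∀ m ≥ K, ∀ n ≥ K,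
      eN ip (PhiL σ e (L m) - PhiL σ e (L n)) < ε) :
    ∃ x : X, ConvTo ip σ e x L := by
  have hM := hd.1
  obtain ⟨x, hx⟩ := hd.2.1 (fun k => PhiL σ e (L k)) (by
    intro ε hε
    obtain ⟨K, hK⟩ := hcau (Real.sqrt ε) (Real.sqrt_pos.mpr hε)
    refine ⟨K, fun m hm n hn => ?_⟩
    have h := (Real.sqrt_lt' (Real.sqrt_pos.mpr hε)).mp (hK m hm n hn)
    rwa [Real.sq_sqrt hε.le] at h)
  refine ⟨x, fun ε hε => ?_⟩
  obtain ⟨K, hK⟩ := hx (ε ^ 2) (by positivity)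
  refine ⟨K, fun k hk => ?_⟩
  rw [eN_sub_comm hM]
  exact (Real.sqrt_lt' hε).mpr (hK k hk)

lemma adj_bound (a : A) : ∃ C : ℝ, 0 ≤ C ∧ ∀ z : X, eN ip (σ a z) ≤ C * eN ip z := by
  obtain ⟨-, ⟨C, hC⟩, -⟩ := hd.2.2.1.1 a
  refine ⟨Real.sqrt (max C 0), Real.sqrt_nonneg _, fun z => ?_⟩
  have h1 : ‖ip (σ a z) (σ a z)‖ ≤ max C 0 * ‖ip z z‖ :=
    (hC z).trans (mul_le_mul_of_nonneg_right (le_max_left _ _) (norm_nonneg _))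
  have h2 := Real.sqrt_le_sqrt h1
  rwa [Real.sqrt_mul (le_max_right C 0) _] at h2

lemma sigma_one_PhiL (L : List (A × B)) : σ 1 (PhiL σ e L) = PhiL σ e L := by
  induction L with
  | nil => simpa using sg_zero hd 1
  | cons p L ih =>
    rw [PhiL_cons, sg_add hd, ih, ← hd.2.2.1.2.2.2.2.1, one_mul]

lemma sigma_one (x : X) : σ 1 x = x := by
  have hM := hd.1
  obtain ⟨L, hL⟩ := approxSeq hd x
  rw [← sub_eq_zero]
  apply eN_smallness hM
  intro ε hε
  obtain ⟨C, hC0, hC⟩ := adj_bound hd 1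
  obtain ⟨K, hK⟩ := hL (ε / (C + 1)) (by positivity)
  have h := hK K le_rfl
  have heq : σ 1 x - x = σ 1 (x - PhiL σ e (L K)) - (x - PhiL σ e (L K)) := by
    rw [sg_sub hd, sigma_one_PhiL hd]; abel
  rw [heq, sub_eq_add_neg]
  have h4 := eN_add hM (σ 1 (x - PhiL σ e (L K))) (-(x - PhiL σ e (L K)))
  rw [eN_neg hM] at h4
  have h5 := hC (x - PhiL σ e (L K))
  have h6 := eN_nonneg (ip := ip) (x - PhiL σ e (L K))
  have : (C + 1) * (ε / (C + 1)) = ε := by field_simp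
  nlinarith

lemma smul_eq_sigma (c : ℂ) (x : X) : c • x = σ (c • 1) x := by
  rw [hd.2.2.1.2.2.2.1 c 1 x, sigma_one hd x]

lemma conv_map {T : X → X} {F : List (A × B) → List (A × B)}
    (hTsub : ∀ u v : X, T (u - v) = T u - T v) {C : ℝ} (hC0 : 0 ≤ C)
    (hC : ∀ z : X, eN ip (T z) ≤ C * eN ip z)
    (hTF : ∀ L : List (A × B), T (PhiL σ e L) = PhiL σ e (F L))
    {x : X} {L : ℕ → List (A × B)} (hx : ConvTo ip σ e x L) :
    ConvTo ip σ e (T x) (fun k => F (L k)) := by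
  intro ε hε
  obtain ⟨K, hK⟩ := hx (ε / (C + 1)) (by positivity)
  refine ⟨K, fun k hk => ?_⟩
  have h1 : T x - PhiL σ e (F (L k)) = T (x - PhiL σ e (L k)) := by
    rw [← hTF, hTsub]
  rw [h1]
  have h2 := hC (x - PhiL σ e (L k))
  have h3 := hK k hk
  have h6 := eN_nonneg (ip := ip) (x - PhiL σ e (L k))
  have : (C + 1) * (ε / (C + 1)) = ε := by field_simp
  nlinarith

lemma sigma_PhiL (a : A) (L : List (A × B)) :
    σ a (PhiL σ e L) = PhiL σ e (L.map fun p => (a * p.1, p.2)) := by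
  induction L with
  | nil => simpa using sg_zero hd a
  | cons p L ih =>
    rw [PhiL_cons, sg_add hd, ih, List.map_cons, PhiL_cons, ← hd.2.2.1.2.2.2.2.1]

lemma opb_PhiL (b : B) (L : List (A × B)) :
    op b • PhiL σ e L = PhiL σ e (L.map fun p => (p.1, p.2 * b)) := by
  induction L with
  | nil => simp
  | cons p L ih =>
    rw [PhiL_cons, smul_add, ih, List.map_cons, PhiL_cons]
    congr 1
    rw [← hd.2.2.1.2.1, smul_smul, ← op_mul]

lemma csmul_PhiL (c : ℂ) (L : List (A × B)) :
    c • PhiL σ e L = PhiL σ e (L.map fun p => (c • p.1, p.2)) := by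
  induction L with
  | nil => simp
  | cons p L ih =>
    rw [PhiL_cons, smul_add, ih, List.map_cons, PhiL_cons, ← hd.2.2.1.2.2.2.1]

/-- negation of the `A`-components of a list. -/
lemma neg_PhiL (L : List (A × B)) :
    PhiL σ e (L.map fun p => (-p.1, p.2)) = - PhiL σ e L := by
  induction L with
  | nil => simp
  | cons p L ih =>
    rw [List.map_cons, PhiL_cons, PhiL_cons, ih, sgA_neg hd]
    abel

lemma PhiL_sub (L M : List (A × B)) :
    PhiL σ e L - PhiL σ e M = PhiL σ e (L ++ M.map fun p => (-p.1, p.2)) := by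
  rw [PhiL_append, neg_PhiL hd, sub_eq_add_neg]

end Dilation

section Two

variable {A X₁ X₂ : Type*} [CStarAlgebra A]
  [AddCommGroup X₁] [Module ℂ X₁] [Module Bᵐᵒᵖ X₁]
  [AddCommGroup X₂] [Module ℂ X₂] [Module Bᵐᵒᵖ X₂]
  {φ : A →ₗ[ℂ] B}
  {ip₁ : X₁ → X₁ → B} {σ₁ : A → X₁ → X₁} {e₁ : X₁}
  {ip₂ : X₂ → X₂ → B} {σ₂ : A → X₂ → X₂} {e₂ : X₂}
  (h₁ : IsPaschkeDilation ip₁ σ₁ e₁ ⇑φ) (h₂ : IsPaschkeDilation ip₂ σ₂ e₂ ⇑φ)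
include h₁ h₂

lemma eN_PhiL_sub_eq (L M : List (A × B)) :
    eN ip₂ (PhiL σ₂ e₂ L - PhiL σ₂ e₂ M) = eN ip₁ (PhiL σ₁ e₁ L - PhiL σ₁ e₁ M) := by
  rw [PhiL_sub h₁, PhiL_sub h₂, eN, eN, PhiL_ip h₁, PhiL_ip h₂]

theorem paschke_unique_aux :
    ∃ W : X₁ → X₂, Function.Bijective W ∧
      (∀ x y : X₁, W (x + y) = W x + W y) ∧
      (∀ (c : ℂ) (x : X₁), W (c • x) = c • W x) ∧
      (∀ (b : B) (x : X₁), W (op b • x) = op b • W x) ∧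
      (∀ x y : X₁, ip₂ (W x) (W y) = ip₁ x y) ∧
      W e₁ = e₂ ∧ (∀ (a : A) (x : X₁), W (σ₁ a x) = σ₂ a (W x)) := by
  have hM₁ := h₁.1
  have hM₂ := h₂.1
  choose Ls hLs using fun x : X₁ => approxSeq h₁ x
  have hWex : ∀ x : X₁, ∃ y : X₂, ConvTo ip₂ σ₂ e₂ y (Ls x) := by
    intro x
    apply complete_conv h₂
    intro ε hε
    obtain ⟨K, hK⟩ := hLs x (ε / 2) (by positivity)
    refine ⟨K, fun m hm n hn => ?_⟩
    rw [eN_PhiL_sub_eq h₁ h₂]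
    have h3 := eN_sub_le hM₁ (PhiL σ₁ e₁ (Ls x m)) x (PhiL σ₁ e₁ (Ls x n))
    rw [eN_sub_comm hM₁ (PhiL σ₁ e₁ (Ls x m)) x] at h3
    linarith [hK m hm, hK n hn]
  choose W hW using hWex
  have char : ∀ (x : X₁) (M : ℕ → List (A × B)), ConvTo ip₁ σ₁ e₁ x M →
      ConvTo ip₂ σ₂ e₂ (W x) M := by
    intro x M hxM ε hε
    obtain ⟨K₁, hK₁⟩ := hW x (ε / 2) (by positivity)
    obtain ⟨K₂, hK₂⟩ := hxM (ε / 4) (by positivity)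
    obtain ⟨K₃, hK₃⟩ := hLs x (ε / 4) (by positivity)
    refine ⟨max K₁ (max K₂ K₃), fun k hk => ?_⟩
    have hk₁ : K₁ ≤ k := le_trans (le_max_left _ _) hk
    have hk₂ : K₂ ≤ k := le_trans (le_trans (le_max_left _ _) (le_max_right _ _)) hk
    have hk₃ : K₃ ≤ k := le_trans (le_trans (le_max_right _ _) (le_max_right _ _)) hk
    have t1 := eN_sub_le hM₂ (W x) (PhiL σ₂ e₂ (Ls x k)) (PhiL σ₂ e₂ (M k))
    have t2 : eN ip₂ (PhiL σ₂ e₂ (Ls x k) - PhiL σ₂ e₂ (M k))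
        = eN ip₁ (PhiL σ₁ e₁ (Ls x k) - PhiL σ₁ e₁ (M k)) := eN_PhiL_sub_eq h₁ h₂ _ _
    have t3 := eN_sub_le hM₁ (PhiL σ₁ e₁ (Ls x k)) x (PhiL σ₁ e₁ (M k))
    rw [eN_sub_comm hM₁ (PhiL σ₁ e₁ (Ls x k)) x] at t3
    linarith [hK₁ k hk₁, hK₂ k hk₂, hK₃ k hk₃]
  have uniq : ∀ {y y' : X₂} {M : ℕ → List (A × B)},
      ConvTo ip₂ σ₂ e₂ y M → ConvTo ip₂ σ₂ e₂ y' M → y = y' :=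
    fun hy hy' => conv_unique h₂ hy hy'
  have mapW : ∀ (F : List (A × B) → List (A × B)) (T₁ : X₁ → X₁) (T₂ : X₂ → X₂),
      (∀ u v, T₁ (u - v) = T₁ u - T₁ v) → (∀ u v, T₂ (u - v) = T₂ u - T₂ v) →
      (∃ C : ℝ, 0 ≤ C ∧ ∀ z, eN ip₁ (T₁ z) ≤ C * eN ip₁ z) →
      (∃ C : ℝ, 0 ≤ C ∧ ∀ z, eN ip₂ (T₂ z) ≤ C * eN ip₂ z) →
      (∀ L, T₁ (PhiL σ₁ e₁ L) = PhiL σ₁ e₁ (F L)) →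
      (∀ L, T₂ (PhiL σ₂ e₂ L) = PhiL σ₂ e₂ (F L)) →
      ∀ x, W (T₁ x) = T₂ (W x) := by
    rintro F T₁ T₂ hs₁ hs₂ ⟨C₁, hC₁0, hC₁⟩ ⟨C₂, hC₂0, hC₂⟩ hTF₁ hTF₂ x
    exact uniq (char _ _ (conv_map h₁ hs₁ hC₁0 hC₁ hTF₁ (hLs x)))
      (conv_map h₂ hs₂ hC₂0 hC₂ hTF₂ (hW x))
  have Wsigma : ∀ (a : A) (x : X₁), W (σ₁ a x) = σ₂ a (W x) := fun a x =>
    mapW (fun L => L.map fun p => (a * p.1, p.2)) (σ₁ a) (σ₂ a)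
      (sg_sub h₁ a) (sg_sub h₂ a) (adj_bound h₁ a) (adj_bound h₂ a)
      (sigma_PhiL h₁ a) (sigma_PhiL h₂ a) x
  have Wop : ∀ (b : B) (x : X₁), W (op b • x) = op b • W x := fun b x =>
    mapW (fun L => L.map fun p => (p.1, p.2 * b)) (fun z => op b • z) (fun z => op b • z)
      (fun u v => smul_sub _ u v) (fun u v => smul_sub _ u v)
      ⟨‖b‖, norm_nonneg b, fun z => eN_opsmul hM₁ b z⟩
      ⟨‖b‖, norm_nonneg b, fun z => eN_opsmul hM₂ b z⟩
      (opb_PhiL h₁ b) (opb_PhiL h₂ b) x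
  have Wsmul : ∀ (c : ℂ) (x : X₁), W (c • x) = c • W x := by
    intro c x
    obtain ⟨C₁, hC₁0, hC₁⟩ := adj_bound h₁ (c • 1)
    obtain ⟨C₂, hC₂0, hC₂⟩ := adj_bound h₂ (c • 1)
    exact mapW (fun L => L.map fun p => (c • p.1, p.2)) (fun z => c • z) (fun z => c • z)
      (fun u v => smul_sub c u v) (fun u v => smul_sub c u v)
      ⟨C₁, hC₁0, fun z => by
        show eN ip₁ (c • z) ≤ C₁ * eN ip₁ z
        rw [smul_eq_sigma h₁]; exact hC₁ z⟩
      ⟨C₂, hC₂0, fun z => by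
        show eN ip₂ (c • z) ≤ C₂ * eN ip₂ z
        rw [smul_eq_sigma h₂]; exact hC₂ z⟩
      (csmul_PhiL h₁ c) (csmul_PhiL h₂ c) x
  have Wadd : ∀ x y : X₁, W (x + y) = W x + W y := by
    intro x y
    have conv1 : ConvTo ip₁ σ₁ e₁ (x + y) (fun k => Ls x k ++ Ls y k) := by
      intro ε hε
      obtain ⟨K₁, hK₁⟩ := hLs x (ε / 2) (by positivity)
      obtain ⟨K₂, hK₂⟩ := hLs y (ε / 2) (by positivity)
      refine ⟨max K₁ K₂, fun k hk => ?_⟩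
      rw [PhiL_append]
      have hre : x + y - (PhiL σ₁ e₁ (Ls x k) + PhiL σ₁ e₁ (Ls y k))
          = (x - PhiL σ₁ e₁ (Ls x k)) + (y - PhiL σ₁ e₁ (Ls y k)) := by abel
      rw [hre]
      have := eN_add hM₁ (x - PhiL σ₁ e₁ (Ls x k)) (y - PhiL σ₁ e₁ (Ls y k))
      linarith [hK₁ k (le_trans (le_max_left _ _) hk), hK₂ k (le_trans (le_max_right _ _) hk)]
    have conv2 : ConvTo ip₂ σ₂ e₂ (W x + W y) (fun k => Ls x k ++ Ls y k) := by
      intro ε hε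
      obtain ⟨K₁, hK₁⟩ := hW x (ε / 2) (by positivity)
      obtain ⟨K₂, hK₂⟩ := hW y (ε / 2) (by positivity)
      refine ⟨max K₁ K₂, fun k hk => ?_⟩
      rw [PhiL_append]
      have hre : W x + W y - (PhiL σ₂ e₂ (Ls x k) + PhiL σ₂ e₂ (Ls y k))
          = (W x - PhiL σ₂ e₂ (Ls x k)) + (W y - PhiL σ₂ e₂ (Ls y k)) := by abel
      rw [hre]
      have := eN_add hM₂ (W x - PhiL σ₂ e₂ (Ls x k)) (W y - PhiL σ₂ e₂ (Ls y k))
      linarith [hK₁ k (le_trans (le_max_left _ _) hk), hK₂ k (le_trans (le_max_right _ _) hk)]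
    exact uniq (char _ _ conv1) conv2
  have We : W e₁ = e₂ := by
    have hone₁ : PhiL σ₁ e₁ [((1 : A), (1 : B))] = e₁ := by
      have : op (1 : B) • e₁ = e₁ := by rw [op_one, one_smul]
      rw [PhiL_cons, PhiL_nil, add_zero, this, sigma_one h₁]
    have hone₂ : PhiL σ₂ e₂ [((1 : A), (1 : B))] = e₂ := by
      have : op (1 : B) • e₂ = e₂ := by rw [op_one, one_smul]
      rw [PhiL_cons, PhiL_nil, add_zero, this, sigma_one h₂]
    refine uniq (char _ (fun _ => [((1 : A), (1 : B))]) ?_) ?_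
    · intro ε hε
      refine ⟨0, fun k _ => ?_⟩
      rw [hone₁, sub_self, eN_zero hM₁]
      exact hε
    · intro ε hε
      refine ⟨0, fun k _ => ?_⟩
      rw [hone₂, sub_self, eN_zero hM₂]
      exact hε
  have ipW : ∀ x y : X₁, ip₂ (W x) (W y) = ip₁ x y := by
    intro x y
    rw [← sub_eq_zero]
    have hsmall : ∀ ε : ℝ, 0 < ε → ‖ip₂ (W x) (W y) - ip₁ x y‖ < ε := by
      intro ε hε
      have hSpos : (0:ℝ) < eN ip₁ x + eN ip₁ y + eN ip₂ (W x) + eN ip₂ (W y) + 3 := by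
        have := eN_nonneg (ip := ip₁) x
        have := eN_nonneg (ip := ip₁) y
        have := eN_nonneg (ip := ip₂) (W x)
        have := eN_nonneg (ip := ip₂) (W y)
        linarith
      set S := eN ip₁ x + eN ip₁ y + eN ip₂ (W x) + eN ip₂ (W y) + 3 with hS
      set δ := min 1 (ε / (4 * S)) with hδ
      have hδpos : 0 < δ := lt_min one_pos (by positivity)
      have hδ1 : δ ≤ 1 := min_le_left _ _
      have hδ2 : δ ≤ ε / (4 * S) := min_le_right _ _
      obtain ⟨K₁, hK₁⟩ := hLs x δ hδpos
      obtain ⟨K₂, hK₂⟩ := hLs y δ hδpos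
      obtain ⟨K₃, hK₃⟩ := hW x δ hδpos
      obtain ⟨K₄, hK₄⟩ := hW y δ hδpos
      set k := max (max K₁ K₂) (max K₃ K₄) with hk
      have a₁ := hK₁ k (le_trans (le_max_left _ _) (le_max_left _ _))
      have a₂ := hK₂ k (le_trans (le_max_right _ _) (le_max_left _ _))
      have b₁ := hK₃ k (le_trans (le_max_left _ _) (le_max_right _ _))
      have b₂ := hK₄ k (le_trans (le_max_right _ _) (le_max_right _ _))
      have hgam : ip₁ (PhiL σ₁ e₁ (Ls x k)) (PhiL σ₁ e₁ (Ls y k))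
          = ip₂ (PhiL σ₂ e₂ (Ls x k)) (PhiL σ₂ e₂ (Ls y k)) := by
        rw [PhiL_ip h₁, PhiL_ip h₂]
      have d₁ := ip_diff_bound hM₁ x y (PhiL σ₁ e₁ (Ls x k)) (PhiL σ₁ e₁ (Ls y k))
      have d₂ := ip_diff_bound hM₂ (W x) (W y) (PhiL σ₂ e₂ (Ls x k)) (PhiL σ₂ e₂ (Ls y k))
      have tri : ‖ip₂ (W x) (W y) - ip₁ x y‖ ≤
          ‖ip₂ (W x) (W y) - ip₂ (PhiL σ₂ e₂ (Ls x k)) (PhiL σ₂ e₂ (Ls y k))‖ +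
          ‖ip₁ x y - ip₁ (PhiL σ₁ e₁ (Ls x k)) (PhiL σ₁ e₁ (Ls y k))‖ := by
        have hsplit : ip₂ (W x) (W y) - ip₁ x y
            = (ip₂ (W x) (W y) - ip₂ (PhiL σ₂ e₂ (Ls x k)) (PhiL σ₂ e₂ (Ls y k)))
              + (ip₁ (PhiL σ₁ e₁ (Ls x k)) (PhiL σ₁ e₁ (Ls y k)) - ip₁ x y) := by
          rw [hgam]; abel
        rw [hsplit]
        refine (norm_add_le _ _).trans ?_
        rw [norm_sub_rev (ip₁ (PhiL σ₁ e₁ (Ls x k)) (PhiL σ₁ e₁ (Ls y k))) (ip₁ x y)]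
      have hy1 := eN_nonneg (ip := ip₁) y
      have hy2 := eN_nonneg (ip := ip₂) (W y)
      have hx1 := eN_nonneg (ip := ip₁) x
      have hx2 := eN_nonneg (ip := ip₂) (W x)
      have e₁n := eN_nonneg (ip := ip₁) (x - PhiL σ₁ e₁ (Ls x k))
      have e₂n := eN_nonneg (ip := ip₁) (y - PhiL σ₁ e₁ (Ls y k))
      have e₃n := eN_nonneg (ip := ip₂) (W x - PhiL σ₂ e₂ (Ls x k))
      have e₄n := eN_nonneg (ip := ip₂) (W y - PhiL σ₂ e₂ (Ls y k))
      have hd1 : ‖ip₁ x y - ip₁ (PhiL σ₁ e₁ (Ls x k)) (PhiL σ₁ e₁ (Ls y k))‖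
          ≤ δ * (eN ip₁ y) + (eN ip₁ x + 1) * δ := by
        refine d₁.trans ?_
        gcongr <;> nlinarith
      have hd2 : ‖ip₂ (W x) (W y) - ip₂ (PhiL σ₂ e₂ (Ls x k)) (PhiL σ₂ e₂ (Ls y k))‖
          ≤ δ * (eN ip₂ (W y)) + (eN ip₂ (W x) + 1) * δ := by
        refine d₂.trans ?_
        gcongr <;> nlinarith
      have hfin : ‖ip₂ (W x) (W y) - ip₁ x y‖ ≤ δ * (2 * S) := by
        calc ‖ip₂ (W x) (W y) - ip₁ x y‖ ≤ _ + _ := tri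
          _ ≤ (δ * (eN ip₂ (W y)) + (eN ip₂ (W x) + 1) * δ)
              + (δ * (eN ip₁ y) + (eN ip₁ x + 1) * δ) := add_le_add hd2 hd1
          _ ≤ δ * (2 * S) := by rw [hS]; nlinarith
      have hlast : δ * (2 * S) < ε := by
        have h2S : (0:ℝ) < 2 * S := by linarith
        calc δ * (2 * S) ≤ (ε / (4 * S)) * (2 * S) :=
              mul_le_mul_of_nonneg_right hδ2 h2S.le
          _ = ε / 2 := by field_simp; ring
          _ < ε := by linarith
      exact lt_of_le_of_lt hfin hlast
    rcases le_or_gt (‖ip₂ (W x) (W y) - ip₁ x y‖) 0 with h0 | h0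
    · exact norm_le_zero_iff.mp h0
    · exact absurd (hsmall _ h0) (lt_irrefl _)
  have Wsub : ∀ x y : X₁, W (x - y) = W x - W y := by
    intro x y
    have h' := Wadd (x - y) y
    rw [sub_add_cancel] at h'
    rw [h']; abel
  have Winj : Function.Injective W := by
    intro x y hxy
    have h0 : W (x - y) = 0 := by rw [Wsub, hxy, sub_self]
    have h1 : ip₁ (x - y) (x - y) = 0 := by
      rw [← ipW (x - y) (x - y), h0, ip_zero_left hM₂]
    rw [← sub_eq_zero]
    exact hM₁.definite _ h1
  have Wsurj : Function.Surjective W := by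
    intro y
    obtain ⟨L, hL⟩ := approxSeq h₂ y
    have hcau : ∀ ε : ℝ, 0 < ε → ∃ K, ∀ m ≥ K, ∀ n ≥ K,
        eN ip₁ (PhiL σ₁ e₁ (L m) - PhiL σ₁ e₁ (L n)) < ε := by
      intro ε hε
      obtain ⟨K, hK⟩ := hL (ε / 2) (by positivity)
      refine ⟨K, fun m hm n hn => ?_⟩
      rw [← eN_PhiL_sub_eq h₁ h₂]
      have h3 := eN_sub_le hM₂ (PhiL σ₂ e₂ (L m)) y (PhiL σ₂ e₂ (L n))
      rw [eN_sub_comm hM₂ (PhiL σ₂ e₂ (L m)) y] at h3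
      linarith [hK m hm, hK n hn]
    obtain ⟨x, hx⟩ := complete_conv h₁ hcau
    exact ⟨x, uniq (char x L hx) hL⟩
  exact ⟨W, ⟨Winj, Wsurj⟩, Wadd, Wsmul, Wop, ipW, We, Wsigma⟩

end Two
end PUAux


/-- **Uniqueness of Paschke's dilation**: any two Paschke dilations of `φ` are related by a
Hilbert module isomorphism `W` with `W e₁ = e₂` and `W σ₁(a) W* = σ₂(a)`. -/
theorem paschke_unique {A B X₁ X₂ : Type*} [CStarAlgebra A] [CStarAlgebra B]
    [AddCommGroup X₁] [Module ℂ X₁] [Module Bᵐᵒᵖ X₁]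
    [AddCommGroup X₂] [Module ℂ X₂] [Module Bᵐᵒᵖ X₂]
    (φ : A →ₗ[ℂ] B)
    (ip₁ : X₁ → X₁ → B) (σ₁ : A → X₁ → X₁) (e₁ : X₁)
    (ip₂ : X₂ → X₂ → B) (σ₂ : A → X₂ → X₂) (e₂ : X₂)
    (h₁ : IsPaschkeDilation ip₁ σ₁ e₁ ⇑φ) (h₂ : IsPaschkeDilation ip₂ σ₂ e₂ ⇑φ) :
    ∃ W : X₁ → X₂, Function.Bijective W ∧
      (∀ x y : X₁, W (x + y) = W x + W y) ∧
      (∀ (c : ℂ) (x : X₁), W (c • x) = c • W x) ∧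
      (∀ (b : B) (x : X₁), W (op b • x) = op b • W x) ∧
      (∀ x y : X₁, ip₂ (W x) (W y) = ip₁ x y) ∧
      W e₁ = e₂ ∧ (∀ (a : A) (x : X₁), W (σ₁ a x) = σ₂ a (W x)) := by
  letI : PartialOrder B := CStarAlgebra.spectralOrder B
  letI : StarOrderedRing B := CStarAlgebra.spectralOrderedRing B
  exact PUAux.paschke_unique_aux h₁ h₂
end
end

section
/- Let B be a von Neumann algebra and X a pre-Hilbert B-module. Every adjointable operator T on X extends to a unique adjointable operator T̃ on the self-dual completion X', the map T ↦ T̃ is a *-isomorphism of P(X) into P(X'), and T̃ x̂ = (Tx)^ for all x ∈ X. -/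
open scoped ComplexOrder
open ContinuousLinearMap MulOpposite

set_option maxHeartbeats 1000000
set_option synthInstance.maxHeartbeats 800000
set_option linter.unusedSectionVars false

noncomputable section

variable {G A H K : Type*} [Group G] [CStarAlgebra A]
  [NormedAddCommGroup H] [InnerProductSpace ℂ H] [CompleteSpace H]
  [NormedAddCommGroup K] [InnerProductSpace ℂ K] [CompleteSpace K]

section AdjointableExtensionAux

variable {H : Type*} [NormedAddCommGroup H] [InnerProductSpace ℂ H] [CompleteSpace H]

instance vnaSMulMemClass : SMulMemClass (VonNeumannAlgebra H) ℂ (H →L[ℂ] H) where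
  smul_mem {s} c _ ha := s.toStarSubalgebra.smul_mem ha c

variable {M : VonNeumannAlgebra H} {X : Type*} [AddCommGroup X] [Module ℂ X]
  [Module (↥M)ᵐᵒᵖ X]

namespace PaschkeAux

local notation "E" => H →L[ℂ] H

lemma coeE_mul (b c : ↥M) : ((b * c : ↥M) : E) = (b : E) * (c : E) := rfl
lemma coeE_add (b c : ↥M) : ((b + c : ↥M) : E) = (b : E) + (c : E) := rfl
lemma coeE_sub (b c : ↥M) : ((b - c : ↥M) : E) = (b : E) - (c : E) := rfl
lemma coeE_star (b : ↥M) : ((star b : ↥M) : E) = star (b : E) := rfl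
lemma coeE_smul (c : ℂ) (b : ↥M) : ((c • b : ↥M) : E) = c • (b : E) := rfl
lemma coeE_norm (b : ↥M) : ‖b‖ = ‖(b : E)‖ := rfl

lemma bnorm_star (b : ↥M) : ‖star b‖ = ‖b‖ := by
  rw [coeE_norm, coeE_norm, coeE_star, norm_star]

lemma bsmul_mul (c : ℂ) (u v : ↥M) : (c • u) * v = c • (u * v) :=
  Subtype.ext (smul_mul_assoc c (u : E) (v : E))

lemma bmul_smul (c : ℂ) (u v : ↥M) : u * (c • v) = c • (u * v) :=
  Subtype.ext (mul_smul_comm c (u : E) (v : E))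

lemma bstar_smul (c : ℂ) (u : ↥M) : star (c • u) = (starRingEnd ℂ c) • star u :=
  Subtype.ext (by
    rw [coeE_star, coeE_smul, coeE_smul, coeE_star, star_smul]
    rfl)

variable {ip : X → X → ↥M}

section PreHilb

variable (h : IsPreHilbertModule ip)
include h

lemma add_right (x y z : X) : ip x (y + z) = ip x y + ip x z := by
  rw [h.star_inner x (y + z), h.add_left, star_add, ← h.star_inner x y, ← h.star_inner x z]

lemma zero_left (x : X) : ip 0 x = 0 := by
  have h0 := h.add_left 0 0 x
  rw [add_zero] at h0
  exact left_eq_add.mp h0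

lemma zero_right (x : X) : ip x 0 = 0 := by
  rw [h.star_inner, zero_left h, star_zero]

lemma neg_left (x y : X) : ip (-x) y = - ip x y := by
  have h0 := h.add_left x (-x) y
  rw [add_neg_cancel, zero_left h] at h0
  exact (neg_eq_of_add_eq_zero_right h0.symm).symm

lemma sub_left (x y z : X) : ip (x - y) z = ip x z - ip y z := by
  rw [sub_eq_add_neg, h.add_left, neg_left h, sub_eq_add_neg]

lemma sub_right (x y z : X) : ip x (y - z) = ip x y - ip x z := by
  rw [h.star_inner x (y - z), sub_left h, star_sub, ← h.star_inner x y, ← h.star_inner x z]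

lemma smul_right (b : ↥M) (x y : X) : ip x (op b • y) = star b * ip x y := by
  rw [h.star_inner x (op b • y), h.smul_left, star_mul, ← h.star_inner x y]

lemma self_nonneg (x : X) : (0 : E) ≤ ((ip x x : ↥M) : E) := by
  obtain ⟨c, hc⟩ := h.pos x
  rw [hc]
  exact star_mul_self_nonneg (c : E)

lemma ext_right {u v : X} (huv : ∀ y, ip y u = ip y v) : u = v := by
  have hz : ∀ y, ip y (u - v) = 0 := fun y => by rw [sub_right h, huv, sub_self]
  have h2 := h.definite _ (hz (u - v))
  exact sub_eq_zero.mp h2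

lemma ext_left {u v : X} (huv : ∀ y, ip u y = ip v y) : u = v :=
  ext_right h fun y => by rw [h.star_inner y u, huv y, ← h.star_inner y v]

end PreHilb

/-- Core Cauchy–Schwarz computation in `B(H)`. -/
lemma csCore (p q a : E) (hq : 0 ≤ q)
    (key : ∀ c : ℝ, 0 ≤ p - (c : ℂ) • (star a * a) - (c : ℂ) • (star a * a)
      + ((c : ℂ) * (c : ℂ)) • (star a * q * a)) :
    ‖a‖ ^ 2 ≤ ‖p‖ * ‖q‖ := by
  have cast1 : ∀ (r : ℝ) (x : E), (r : ℂ) • x = r • x := fun r x => by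
    rw [← algebraMap_smul ℂ r x]; norm_num
  have key' : ∀ c : ℝ, 0 ≤ p - (2 * c) • (star a * a) + (c * c) • (star a * q * a) := by
    intro c
    have hk := key c
    have he : p - (c : ℂ) • (star a * a) - (c : ℂ) • (star a * a)
        + ((c : ℂ) * (c : ℂ)) • (star a * q * a)
        = p - (2 * c) • (star a * a) + (c * c) • (star a * q * a) := by
      rw [cast1, ← Complex.ofReal_mul, cast1]
      module
    rwa [he] at hk
  have haa : (0 : E) ≤ star a * a := star_mul_self_nonneg a
  have hqn : q ≤ ‖q‖ • 1 := by
    have h1 := (IsSelfAdjoint.of_nonneg hq).le_algebraMap_norm_self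
    rwa [Algebra.algebraMap_eq_smul_one] at h1
  have hconj : star a * q * a ≤ ‖q‖ • (star a * a) := by
    calc star a * q * a ≤ star a * (‖q‖ • 1) * a := star_left_conjugate_le_conjugate hqn a
      _ = ‖q‖ • (star a * a) := by rw [mul_smul_comm, mul_one, smul_mul_assoc]
  have main : ∀ c : ℝ, 0 ≤ c → (2 * c - c * c * ‖q‖) • (star a * a) ≤ p := by
    intro c hc
    have h2 : (c * c) • (star a * q * a) ≤ (c * c) • (‖q‖ • (star a * a)) :=
      smul_le_smul_of_nonneg_left hconj (mul_nonneg hc hc)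
    have h4 : (0 : E) ≤ p - (2 * c) • (star a * a) + (c * c) • (‖q‖ • (star a * a)) :=
      le_trans (key' c) (by exact add_le_add le_rfl h2)
    have h5 : p - (2 * c) • (star a * a) + (c * c) • (‖q‖ • (star a * a))
        = p - (2 * c - c * c * ‖q‖) • (star a * a) := by
      rw [smul_smul]; module
    rw [h5] at h4
    exact sub_nonneg.mp h4
  have h9 : ‖star a * a‖ = ‖a‖ * ‖a‖ := CStarRing.norm_star_mul_self
  rcases eq_or_lt_of_le (norm_nonneg q) with hq0 | hq0
  · have hz : ∀ c : ℝ, 0 ≤ c → (2 * c) • (star a * a) ≤ p := by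
      intro c hc
      have hm := main c hc
      rw [← hq0, mul_zero, sub_zero] at hm
      exact hm
    have hnorm : ∀ c : ℝ, 0 < c → (2 * c) * ‖star a * a‖ ≤ ‖p‖ := by
      intro c hc
      have h6 : ‖(2 * c) • (star a * a)‖ ≤ ‖p‖ :=
        CStarAlgebra.norm_le_norm_of_nonneg_of_le
          (smul_nonneg (by positivity) haa) (hz c hc.le)
      rwa [norm_smul, Real.norm_eq_abs, abs_of_pos (by positivity)] at h6
    have hA : ‖star a * a‖ = 0 := by
      by_contra hA
      have hApos : 0 < ‖star a * a‖ := lt_of_le_of_ne (norm_nonneg _) (Ne.symm hA)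
      have hSne : ‖star a * a‖ ≠ 0 := ne_of_gt hApos
      have h7 := hnorm ((‖p‖ + 1) / (2 * ‖star a * a‖))
        (div_pos (by positivity) (by linarith))
      have h8 : 2 * ((‖p‖ + 1) / (2 * ‖star a * a‖)) * ‖star a * a‖ = ‖p‖ + 1 := by
        field_simp
      rw [h8] at h7
      linarith [norm_nonneg p]
    have hA0 : ‖a‖ = 0 := by nlinarith [norm_nonneg a]
    rw [hA0]
    simpa using mul_nonneg (norm_nonneg p) (norm_nonneg q)
  · have hc := main (1 / ‖q‖) (by positivity)
    have hcoef : 2 * (1 / ‖q‖) - (1 / ‖q‖) * (1 / ‖q‖) * ‖q‖ = 1 / ‖q‖ := by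
      field_simp
      ring
    rw [hcoef] at hc
    have h7 : star a * a ≤ ‖q‖ • p := by
      have h6 := smul_le_smul_of_nonneg_left hc hq0.le
      rwa [smul_smul, mul_one_div, div_self (ne_of_gt hq0), one_smul] at h6
    have h8 : ‖star a * a‖ ≤ ‖q‖ * ‖p‖ := by
      have h6 := CStarAlgebra.norm_le_norm_of_nonneg_of_le haa h7
      rwa [norm_smul, Real.norm_eq_abs, abs_of_pos hq0] at h6
    nlinarith [norm_nonneg a]

lemma bstar_csmul (c : ℝ) (u : ↥M) : star ((c : ℂ) • u) = (c : ℂ) • star u := by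
  rw [bstar_smul, Complex.conj_ofReal]

section IPCS

variable (h : IsPreHilbertModule ip)
include h

/-- Cauchy–Schwarz for the `↥M`-valued inner product. -/
lemma ip_cs (x y : X) : ‖ip x y‖ ^ 2 ≤ ‖ip x x‖ * ‖ip y y‖ := by
  rw [coeE_norm (ip x y), coeE_norm (ip x x), coeE_norm (ip y y)]
  apply csCore _ _ _ (self_nonneg h y)
  intro c
  set a : ↥M := ip x y with ha
  set b : ↥M := (c : ℂ) • a with hb
  have expand : ip (x - op b • y) (x - op b • y)
      = ip x x - (c : ℂ) • (star a * a) - (c : ℂ) • (star a * a)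
        + ((c : ℂ) * (c : ℂ)) • (star a * ip y y * a) := by
    rw [sub_left h, sub_right h, sub_right h, smul_right h, h.smul_left, h.smul_left,
      smul_right h, h.star_inner y x]
    rw [hb, bstar_csmul]
    simp only [bsmul_mul, bmul_smul, smul_smul, ← ha]
    abel
  have hpos := self_nonneg h (x - op b • y)
  rw [expand] at hpos
  simpa only [coeE_sub, coeE_add, coeE_smul, coeE_mul, coeE_star] using hpos

lemma bdd_hat (x : X) : IsBddModMap ip (fun y => ip y x) := by
  refine ⟨fun a b => h.add_left a b x, fun b y => h.smul_left b y x, ‖ip x x‖, fun y => ?_⟩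
  have := ip_cs h y x
  rw [mul_comm] at this
  exact this

end IPCS

lemma bdd_zero : IsBddModMap ip (0 : X → ↥M) :=
  ⟨fun _ _ => by simp, fun _ _ => by simp, 0, fun x => by simp⟩

lemma bdd_add {f g : X → ↥M} (hf : IsBddModMap ip f) (hg : IsBddModMap ip g) :
    IsBddModMap ip (f + g) := by
  obtain ⟨Cf, hCf⟩ := hf.2.2
  obtain ⟨Cg, hCg⟩ := hg.2.2
  refine ⟨fun a b => ?_, fun b x => ?_, 2 * Cf + 2 * Cg, fun x => ?_⟩
  · simp only [Pi.add_apply, hf.1, hg.1]; abel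
  · simp only [Pi.add_apply, hf.2.1, hg.2.1, add_mul]
  · have h1 : ‖f x + g x‖ ≤ ‖f x‖ + ‖g x‖ := norm_add_le _ _
    have h2 := hCf x
    have h3 := hCg x
    simp only [Pi.add_apply]
    nlinarith [norm_nonneg (f x), norm_nonneg (g x), norm_nonneg (f x + g x),
      sq_nonneg (‖f x‖ - ‖g x‖)]

lemma bdd_smulc (c : ℂ) {f : X → ↥M} (hf : IsBddModMap ip f) :
    IsBddModMap ip (c • f) := by
  obtain ⟨Cf, hCf⟩ := hf.2.2
  refine ⟨fun a b => ?_, fun b x => ?_, ‖c‖ ^ 2 * Cf, fun x => ?_⟩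
  · simp only [Pi.smul_apply, hf.1, smul_add]
  · simp only [Pi.smul_apply, hf.2.1, bsmul_mul]
  · have h2 := hCf x
    simp only [Pi.smul_apply, norm_smul]
    have hc2 : (‖c‖ * ‖f x‖) ^ 2 = ‖c‖ ^ 2 * ‖f x‖ ^ 2 := by ring
    rw [hc2]
    nlinarith [norm_nonneg c, sq_nonneg ‖c‖]

lemma bdd_mulB (b : ↥M) {g : X → ↥M} (hg : IsBddModMap ip g) :
    IsBddModMap ip (fun x => star b * g x) := by
  obtain ⟨Cg, hCg⟩ := hg.2.2
  refine ⟨fun a c => ?_, fun c x => ?_, ‖b‖ ^ 2 * Cg, fun x => ?_⟩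
  · simp only [hg.1, mul_add]
  · simp only [hg.2.1, mul_assoc]
  · have h1 : ‖star b * g x‖ ≤ ‖b‖ * ‖g x‖ := by
      calc ‖star b * g x‖ ≤ ‖star b‖ * ‖g x‖ := norm_mul_le _ _
        _ = ‖b‖ * ‖g x‖ := by rw [bnorm_star]
    have h2 := hCg x
    nlinarith [norm_nonneg (g x), norm_nonneg b, norm_nonneg (star b * g x),
      mul_nonneg (norm_nonneg b) (norm_nonneg (g x))]

/-- The submodule of bounded module maps. -/
def bddSub (ip : X → X → ↥M) : Submodule ℂ (X → ↥M) where
  carrier := {f | IsBddModMap ip f}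
  add_mem' hf hg := bdd_add hf hg
  zero_mem' := bdd_zero
  smul_mem' c f hf := bdd_smulc c hf

/-- A structure wrapper for the set of bounded module maps (to avoid inheriting the
product topology instances). -/
structure DualMod (ip : X → X → ↥M) : Type _ where
  toFun : X → ↥M
  bdd' : IsBddModMap ip toFun

namespace DualMod

variable {ip : X → X → ↥M}

lemma ext' {u v : DualMod ip} (huv : u.toFun = v.toFun) : u = v := by
  cases u; cases v; simpa using huv

instance : Add (DualMod ip) := ⟨fun u v => ⟨u.toFun + v.toFun, bdd_add u.bdd' v.bdd'⟩⟩
instance : Zero (DualMod ip) := ⟨⟨0, bdd_zero⟩⟩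
instance : SMul ℂ (DualMod ip) := ⟨fun c u => ⟨c • u.toFun, bdd_smulc c u.bdd'⟩⟩
instance : SMul ℕ (DualMod ip) := ⟨fun n u => ⟨(n : ℂ) • u.toFun, bdd_smulc _ u.bdd'⟩⟩
instance : SMul ℤ (DualMod ip) := ⟨fun n u => ⟨(n : ℂ) • u.toFun, bdd_smulc _ u.bdd'⟩⟩
instance : Neg (DualMod ip) := ⟨fun u => ⟨(-1 : ℂ) • u.toFun, bdd_smulc _ u.bdd'⟩⟩
instance : Sub (DualMod ip) := ⟨fun u v => u + -v⟩

@[simp] lemma add_toFun (u v : DualMod ip) : (u + v).toFun = u.toFun + v.toFun := rfl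
@[simp] lemma zero_toFun : (0 : DualMod ip).toFun = 0 := rfl
@[simp] lemma smul_toFun (c : ℂ) (u : DualMod ip) : (c • u).toFun = c • u.toFun := rfl
@[simp] lemma neg_toFun (u : DualMod ip) : (-u).toFun = -u.toFun := by
  show (-1 : ℂ) • u.toFun = -u.toFun
  rw [neg_one_smul]
@[simp] lemma sub_toFun (u v : DualMod ip) : (u - v).toFun = u.toFun - v.toFun := by
  show u.toFun + ((-1 : ℂ) • v.toFun) = _
  rw [neg_one_smul, ← sub_eq_add_neg]

instance : AddCommGroup (DualMod ip) :=
  Function.Injective.addCommGroup (toFun)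
    (fun _ _ hab => ext' hab) rfl (fun _ _ => rfl) (fun u => neg_toFun u)
    (fun u v => sub_toFun u v)
    (fun u n => by show ((n : ℂ) • u.toFun) = n • u.toFun; rw [Nat.cast_smul_eq_nsmul])
    (fun u n => by show ((n : ℂ) • u.toFun) = n • u.toFun; rw [Int.cast_smul_eq_zsmul])

def toFunHom : DualMod ip →+ (X → ↥M) :=
  { toFun := toFun, map_zero' := rfl, map_add' := fun _ _ => rfl }

instance : Module ℂ (DualMod ip) :=
  Function.Injective.module ℂ (toFunHom) (fun _ _ hab => ext' hab) (fun _ _ => rfl)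

end DualMod

section SelfDual

variable (h : IsPreHilbertModule ip) {ip' : (X → ↥M) → (X → ↥M) → ↥M}
  (hsd : IsSelfDualExtension ip ip')
include h hsd

lemma ip'_zero_left {f : X → ↥M} (hf : IsBddModMap ip f) : ip' 0 f = 0 := by
  have h0 := hsd.1 0 0 f bdd_zero bdd_zero hf
  rw [add_zero] at h0
  exact left_eq_add.mp h0

lemma ip'_add_right {f g₁ g₂ : X → ↥M} (hf : IsBddModMap ip f)
    (hg₁ : IsBddModMap ip g₁) (hg₂ : IsBddModMap ip g₂) :
    ip' f (g₁ + g₂) = ip' f g₁ + ip' f g₂ := by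
  rw [hsd.2.2.2.1 f (g₁ + g₂) hf (bdd_add hg₁ hg₂), hsd.1 g₁ g₂ f hg₁ hg₂ hf, star_add,
    ← hsd.2.2.2.1 f g₁ hf hg₁, ← hsd.2.2.2.1 f g₂ hf hg₂]

lemma ip'_mul_right (b : ↥M) {f g : X → ↥M} (hf : IsBddModMap ip f)
    (hg : IsBddModMap ip g) :
    ip' f (fun x => star b * g x) = star b * ip' f g := by
  rw [hsd.2.2.2.1 f _ hf (bdd_mulB b hg), hsd.2.2.2.2.1 b g f hg hf, star_mul,
    ← hsd.2.2.2.1 f g hf hg]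

/-- Cauchy–Schwarz for the extended inner product. -/
lemma ip'_cs {f g : X → ↥M} (hf : IsBddModMap ip f) (hg : IsBddModMap ip g) :
    ‖ip' f g‖ ^ 2 ≤ ‖ip' f f‖ * ‖ip' g g‖ := by
  rw [coeE_norm (ip' f g), coeE_norm (ip' f f), coeE_norm (ip' g g)]
  have hq : (0 : E) ≤ ((ip' g g : ↥M) : E) := by
    obtain ⟨c, hc⟩ := hsd.2.1 g hg
    rw [hc]
    exact star_mul_self_nonneg (c : E)
  apply csCore _ _ _ hq
  intro c
  set a : ↥M := ip' f g with ha
  set b' : ↥M := -((c : ℂ) • a) with hb'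
  set m : X → ↥M := fun x => star b' * g x with hm
  have hmb : IsBddModMap ip m := bdd_mulB b' hg
  have hz : IsBddModMap ip (f + m) := bdd_add hf hmb
  have e1 : ip' (f + m) (f + m) = ip' f (f + m) + ip' m (f + m) :=
    hsd.1 f m (f + m) hf hmb hz
  have e2 : ip' f (f + m) = ip' f f + ip' f m := ip'_add_right h hsd hf hf hmb
  have e3 : ip' m (f + m) = ip' m f + ip' m m := ip'_add_right h hsd hmb hf hmb
  have e4 : ip' f m = star b' * ip' f g := ip'_mul_right h hsd b' hf hg
  have e5 : ip' m f = ip' g f * b' := hsd.2.2.2.2.1 b' g f hg hf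
  have e6 : ip' m m = star b' * ip' g g * b' := by
    have e7 : ip' g m = star b' * ip' g g := ip'_mul_right h hsd b' hg hg
    have e8 : ip' m m = ip' g m * b' := hsd.2.2.2.2.1 b' g m hg hmb
    rw [e8, e7]
  have e9 : ip' g f = star a := by
    rw [ha, hsd.2.2.2.1 g f hg hf]
  have expand : ip' (f + m) (f + m)
      = ip' f f - (c : ℂ) • (star a * a) - (c : ℂ) • (star a * a)
        + ((c : ℂ) * (c : ℂ)) • (star a * ip' g g * a) := by
    rw [e1, e2, e3, e4, e5, e6, e9, hb', star_neg, bstar_csmul]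
    simp only [neg_mul, mul_neg, neg_neg, bsmul_mul, bmul_smul, smul_smul, ← ha]
    abel
  have hpos : (0 : E) ≤ ((ip' (f + m) (f + m) : ↥M) : E) := by
    obtain ⟨cz, hcz⟩ := hsd.2.1 (f + m) hz
    rw [hcz]
    exact star_mul_self_nonneg (cz : E)
  rw [expand] at hpos
  simpa only [coeE_sub, coeE_add, coeE_smul, coeE_mul, coeE_star] using hpos

lemma ip'_hat_hat (x : X) : ip' (fun y => ip y x) (fun y => ip y x) = ip x x :=
  hsd.2.2.2.2.2.1 x (fun y => ip y x) (bdd_hat h x)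

lemma eval_bound {f : X → ↥M} (hf : IsBddModMap ip f) (z : X) :
    ‖f z‖ ^ 2 ≤ ‖ip z z‖ * ‖ip' f f‖ := by
  have h1 : f z = ip' (fun y => ip y z) f := (hsd.2.2.2.2.2.1 z f hf).symm
  rw [h1]
  have h2 := ip'_cs h hsd (bdd_hat h z) hf
  rwa [ip'_hat_hat h hsd] at h2

end SelfDual

section Adjoint

variable (h : IsPreHilbertModule ip) {T S : X → X}
include h

lemma adj_rel' (hrel : ∀ x y, ip (T x) y = ip x (S y)) :
    ∀ x y, ip (S x) y = ip x (T y) := fun x y => by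
  calc ip (S x) y = star (ip y (S x)) := h.star_inner (S x) y
    _ = star (ip (T y) x) := by rw [hrel y x]
    _ = ip x (T y) := (h.star_inner x (T y)).symm

lemma adj_unique {S' : X → X} (h1 : ∀ x y, ip (T x) y = ip x (S y))
    (h2 : ∀ x y, ip (T x) y = ip x (S' y)) : S = S' :=
  funext fun y => ext_right h fun z => by rw [← h1 z y, h2 z y]

lemma Tmod (hrel : ∀ x y, ip (T x) y = ip x (S y)) (b : ↥M) (x : X) :
    T (op b • x) = op b • T x :=
  ext_left h fun y => by rw [hrel, h.smul_left, ← hrel, ← h.smul_left]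

lemma Sadd (hrel : ∀ x y, ip (T x) y = ip x (S y)) (u v : X) :
    S (u + v) = S u + S v :=
  ext_right h fun z => by
    rw [← hrel z (u + v), add_right h, hrel z u, hrel z v, ← add_right h]

lemma adj_bound (hrel : ∀ x y, ip (T x) y = ip x (S y))
    (hbd : ∃ C : ℝ, ∀ x, ‖ip (T x) (T x)‖ ≤ C * ‖ip x x‖) :
    ∃ C : ℝ, ∀ x, ‖ip (S x) (S x)‖ ≤ C * ‖ip x x‖ := by
  obtain ⟨C, hC⟩ := hbd
  refine ⟨max C 0, fun x => ?_⟩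
  set u := ‖ip (S x) (S x)‖ with hu
  have h1 : ip (T (S x)) x = ip (S x) (S x) := hrel (S x) x
  have h2 : u ^ 2 ≤ ‖ip (T (S x)) (T (S x))‖ * ‖ip x x‖ := by
    rw [hu, ← h1]
    exact ip_cs h _ _
  have h3 : ‖ip (T (S x)) (T (S x))‖ ≤ max C 0 * u := by
    refine le_trans (hC (S x)) ?_
    exact mul_le_mul_of_nonneg_right (le_max_left _ _) (norm_nonneg _)
  have hun : (0 : ℝ) ≤ u := norm_nonneg _
  rcases eq_or_lt_of_le hun with h4 | h4
  · rw [← h4]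
    positivity
  · have h5 : u ^ 2 ≤ (max C 0 * u) * ‖ip x x‖ :=
      le_trans h2 (mul_le_mul_of_nonneg_right h3 (norm_nonneg _))
    nlinarith [h5, h4]

lemma bdd_compT (hTadd : ∀ x y, T (x + y) = T x + T y)
    (hTmod : ∀ (b : ↥M) (x : X), T (op b • x) = op b • T x)
    (hTbd : ∃ C : ℝ, ∀ x, ‖ip (T x) (T x)‖ ≤ C * ‖ip x x‖)
    {k : X → ↥M} (hk : IsBddModMap ip k) :
    IsBddModMap ip (fun x => k (T x)) := by
  obtain ⟨Ck, hCk⟩ := hk.2.2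
  obtain ⟨CT, hCT⟩ := hTbd
  refine ⟨fun a b => by simp only [hTadd, hk.1], fun b x => by simp only [hTmod, hk.2.1],
    (max Ck 0) * (max CT 0), fun x => ?_⟩
  have h1 : ‖k (T x)‖ ^ 2 ≤ max Ck 0 * ‖ip (T x) (T x)‖ := by
    refine le_trans (hCk (T x)) ?_
    exact mul_le_mul_of_nonneg_right (le_max_left _ _) (norm_nonneg _)
  have h2 : ‖ip (T x) (T x)‖ ≤ max CT 0 * ‖ip x x‖ := by
    refine le_trans (hCT x) ?_
    exact mul_le_mul_of_nonneg_right (le_max_left _ _) (norm_nonneg _)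
  calc ‖k (T x)‖ ^ 2 ≤ max Ck 0 * ‖ip (T x) (T x)‖ := h1
    _ ≤ max Ck 0 * (max CT 0 * ‖ip x x‖) :=
      mul_le_mul_of_nonneg_left h2 (le_max_right _ _)
    _ = (max Ck 0) * (max CT 0) * ‖ip x x‖ := by ring

end Adjoint

section KeyBound

variable (h : IsPreHilbertModule ip) {ip' : (X → ↥M) → (X → ↥M) → ↥M}
  (hsd : IsSelfDualExtension ip ip')
include h hsd

omit h hsd in
lemma smul_as_mul (d : ℂ) (g : X → ↥M) :
    (fun x => star ((starRingEnd ℂ d) • (1 : ↥M)) * g x) = d • g := by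
  funext x
  rw [bstar_smul, Complex.conj_conj, star_one, bsmul_mul, one_mul, Pi.smul_apply]

omit h in
lemma ip'_smul_left (c : ℂ) {f g : X → ↥M} (hf : IsBddModMap ip f)
    (hg : IsBddModMap ip g) :
    ip' (c • f) g = (starRingEnd ℂ c) • ip' f g := by
  have e := hsd.2.2.2.2.1 ((starRingEnd ℂ c) • (1 : ↥M)) f g hf hg
  rw [smul_as_mul] at e
  rw [e, bmul_smul, mul_one]

omit h in
lemma ip'_smul_right (c : ℂ) {f g : X → ↥M} (hf : IsBddModMap ip f)
    (hg : IsBddModMap ip g) :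
    ip' f (c • g) = c • ip' f g := by
  rw [hsd.2.2.2.1 f (c • g) hf (bdd_smulc c hg), ip'_smul_left hsd c hg hf,
    bstar_smul, Complex.conj_conj, ← hsd.2.2.2.1 f g hf hg]

omit h in
lemma ip'_smul_smul (c : ℂ) {f : X → ↥M} (hf : IsBddModMap ip f) :
    ip' (c • f) (c • f) = (starRingEnd ℂ c * c) • ip' f f := by
  rw [ip'_smul_left hsd c hf (bdd_smulc c hf), ip'_smul_right hsd c hf hf, smul_smul]

lemma key_bound {T : X → X}
    (hTadd : ∀ x y, T (x + y) = T x + T y)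
    (hTmod : ∀ (b : ↥M) (x : X), T (op b • x) = op b • T x)
    (hTbd : ∃ C : ℝ, ∀ x, ‖ip (T x) (T x)‖ ≤ C * ‖ip x x‖) :
    ∃ C : ℝ, 0 ≤ C ∧ ∀ k, IsBddModMap ip k →
      ‖ip' (fun x => k (T x)) (fun x => k (T x))‖ ≤ C * ‖ip' k k‖ := by
  classical
  letI : NormedAddCommGroup (DualMod (ip := ip)) := AddGroupNorm.toNormedAddCommGroup
    { toFun := fun u => Real.sqrt ‖ip' u.toFun u.toFun‖
      map_zero' := by
        have h0 : ip' (0 : X → ↥M) 0 = 0 := ip'_zero_left h hsd bdd_zero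
        simp [h0]
      add_le' := by
        intro u v
        have hf : IsBddModMap ip u.toFun := u.bdd'
        have hg : IsBddModMap ip v.toFun := v.bdd'
        have e1 : ip' (u.toFun + v.toFun) (u.toFun + v.toFun)
            = ip' u.toFun u.toFun + ip' u.toFun v.toFun
              + (ip' v.toFun u.toFun + ip' v.toFun v.toFun) := by
          rw [hsd.1 u.toFun v.toFun (u.toFun + v.toFun) hf hg (bdd_add hf hg),
            ip'_add_right h hsd hf hf hg, ip'_add_right h hsd hg hf hg]
        have hcs := ip'_cs h hsd hf hg
        have hsym : ‖ip' v.toFun u.toFun‖ = ‖ip' u.toFun v.toFun‖ := by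
          rw [hsd.2.2.2.1 v.toFun u.toFun hg hf, bnorm_star]
        have hR : ‖ip' u.toFun v.toFun‖
            ≤ Real.sqrt ‖ip' u.toFun u.toFun‖ * Real.sqrt ‖ip' v.toFun v.toFun‖ := by
          have h3 := Real.sqrt_le_sqrt hcs
          rw [Real.sqrt_sq (norm_nonneg _), Real.sqrt_mul (norm_nonneg _)] at h3
          exact h3
        have hnorm1 : ‖ip' ((u + v).toFun) ((u + v).toFun)‖
            ≤ ‖ip' u.toFun u.toFun‖ + 2 * ‖ip' u.toFun v.toFun‖ + ‖ip' v.toFun v.toFun‖ := by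
          rw [DualMod.add_toFun, e1]
          calc ‖ip' u.toFun u.toFun + ip' u.toFun v.toFun
              + (ip' v.toFun u.toFun + ip' v.toFun v.toFun)‖
              ≤ ‖ip' u.toFun u.toFun + ip' u.toFun v.toFun‖
                + ‖ip' v.toFun u.toFun + ip' v.toFun v.toFun‖ := norm_add_le _ _
            _ ≤ ‖ip' u.toFun u.toFun‖ + ‖ip' u.toFun v.toFun‖
                + (‖ip' v.toFun u.toFun‖ + ‖ip' v.toFun v.toFun‖) :=
                add_le_add (norm_add_le _ _) (norm_add_le _ _)
            _ = ‖ip' u.toFun u.toFun‖ + 2 * ‖ip' u.toFun v.toFun‖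
                + ‖ip' v.toFun v.toFun‖ := by rw [hsym]; ring
        have h4 : ‖ip' ((u + v).toFun) ((u + v).toFun)‖
            ≤ (Real.sqrt ‖ip' u.toFun u.toFun‖ + Real.sqrt ‖ip' v.toFun v.toFun‖) ^ 2 := by
          have hP := Real.sq_sqrt (norm_nonneg (ip' u.toFun u.toFun))
          have hQ := Real.sq_sqrt (norm_nonneg (ip' v.toFun v.toFun))
          nlinarith [hnorm1, hR, Real.sqrt_nonneg ‖ip' u.toFun u.toFun‖,
            Real.sqrt_nonneg ‖ip' v.toFun v.toFun‖, norm_nonneg (ip' u.toFun v.toFun)]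
        have h5 := Real.sqrt_le_sqrt h4
        rwa [Real.sqrt_sq (by positivity)] at h5
      neg' := by
        intro u
        have hcoe : (-u).toFun = ((-1 : ℂ)) • u.toFun := rfl
        show Real.sqrt ‖ip' (-u).toFun (-u).toFun‖ = Real.sqrt ‖ip' u.toFun u.toFun‖
        rw [hcoe, ip'_smul_smul hsd (-1) u.bdd']
        norm_num
      eq_zero_of_map_eq_zero' := by
        intro u hu
        have h1 : ‖ip' u.toFun u.toFun‖ = 0 :=
          (Real.sqrt_eq_zero (norm_nonneg _)).mp hu
        exact DualMod.ext' (hsd.2.2.1 u.toFun u.bdd' (norm_eq_zero.mp h1)) }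
  have norm_def : ∀ u : DualMod (ip := ip), ‖u‖ = Real.sqrt ‖ip' u.toFun u.toFun‖ :=
    fun u => rfl
  letI : NormedSpace ℂ (DualMod (ip := ip)) := by
    refine ⟨fun c u => le_of_eq ?_⟩
    rw [norm_def, norm_def]
    have e : ip' (c • u).toFun (c • u).toFun = (starRingEnd ℂ c * c) • ip' u.toFun u.toFun := by
      rw [DualMod.smul_toFun, ip'_smul_smul hsd c u.bdd']
    rw [e, coeE_norm, coeE_smul, norm_smul, ← coeE_norm]
    have hnc : ‖starRingEnd ℂ c * c‖ = ‖c‖ * ‖c‖ := by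
      rw [norm_mul, RCLike.norm_conj]
    rw [hnc, Real.sqrt_mul (mul_self_nonneg _), Real.sqrt_mul_self (norm_nonneg c)]
  letI : CompleteSpace (DualMod (ip := ip)) := by
    apply Metric.complete_of_cauchySeq_tendsto
    intro u hu
    have hcau : ∀ ε : ℝ, 0 < ε → ∃ N, ∀ m ≥ N, ∀ n ≥ N,
        ‖ip' ((u m).toFun - (u n).toFun) ((u m).toFun - (u n).toFun)‖ < ε := by
      intro ε hε
      obtain ⟨N, hN⟩ := Metric.cauchySeq_iff.mp hu (Real.sqrt ε) (Real.sqrt_pos.mpr hε)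
      refine ⟨N, fun m hm n hn => ?_⟩
      have h1 := hN m hm n hn
      rw [dist_eq_norm, norm_def] at h1
      have h2 : ‖ip' ((u m - u n).toFun) ((u m - u n).toFun)‖ < ε := by
        nlinarith [Real.sq_sqrt (norm_nonneg (ip' ((u m - u n).toFun) ((u m - u n).toFun))),
          Real.sq_sqrt hε.le, Real.sqrt_nonneg ε,
          Real.sqrt_nonneg ‖ip' ((u m - u n).toFun) ((u m - u n).toFun)‖, h1]
      rwa [DualMod.sub_toFun] at h2
    obtain ⟨f, hfb, hfc⟩ := hsd.2.2.2.2.2.2.2 (fun n => (u n).toFun) (fun n => (u n).bdd') hcau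
    refine ⟨⟨f, hfb⟩, ?_⟩
    rw [Metric.tendsto_atTop]
    intro ε hε
    obtain ⟨N, hN⟩ := hfc (ε ^ 2) (by positivity)
    refine ⟨N, fun n hn => ?_⟩
    have h1 := hN n hn
    rw [dist_eq_norm, norm_def]
    have h2 : ‖ip' ((u n - ⟨f, hfb⟩).toFun) ((u n - ⟨f, hfb⟩).toFun)‖ < ε ^ 2 := by
      rw [DualMod.sub_toFun]
      exact h1
    have h3 := Real.sqrt_lt_sqrt (norm_nonneg _) h2
    rwa [Real.sqrt_sq hε.le] at h3
  let Λ : DualMod (ip := ip) →ₗ[ℂ] DualMod (ip := ip) :=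
    { toFun := fun k => ⟨fun x => k.toFun (T x), bdd_compT h hTadd hTmod hTbd k.bdd'⟩
      map_add' := fun a b => DualMod.ext' rfl
      map_smul' := fun c a => DualMod.ext' rfl }
  have hptws : ∀ (v : ℕ → DualMod (ip := ip)) (vl : DualMod (ip := ip)),
      Filter.Tendsto v Filter.atTop (nhds vl) → ∀ z : X,
      Filter.Tendsto (fun n => ((v n).toFun z : ↥M)) Filter.atTop (nhds (vl.toFun z)) := by
    intro v vl hv z
    rw [tendsto_iff_norm_sub_tendsto_zero]
    have hb : ∀ n, ‖(v n).toFun z - vl.toFun z‖ ≤ Real.sqrt ‖ip z z‖ * ‖v n - vl‖ := by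
      intro n
      have h1 := eval_bound h hsd (v n - vl).bdd' z
      have h2 : ‖(v n - vl).toFun z‖
          ≤ Real.sqrt (‖ip z z‖ * ‖ip' ((v n - vl).toFun) ((v n - vl).toFun)‖) := by
        have h3 := Real.sqrt_le_sqrt h1
        rwa [Real.sqrt_sq (norm_nonneg _)] at h3
      rw [Real.sqrt_mul (norm_nonneg _)] at h2
      have h4 : (v n - vl).toFun z = (v n).toFun z - vl.toFun z := by
        rw [DualMod.sub_toFun]; rfl
      rw [h4] at h2
      rw [norm_def]
      exact h2
    have hzero : Filter.Tendsto (fun n => ‖v n - vl‖) Filter.atTop (nhds 0) :=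
      tendsto_iff_norm_sub_tendsto_zero.mp hv
    have hzero2 : Filter.Tendsto (fun n => Real.sqrt ‖ip z z‖ * ‖v n - vl‖)
        Filter.atTop (nhds 0) := by
      simpa using hzero.const_mul (Real.sqrt ‖ip z z‖)
    exact squeeze_zero (fun n => norm_nonneg _) hb hzero2
  have hcont : Continuous Λ := by
    apply Λ.continuous_of_seq_closed_graph
    intro w x y hx hy
    apply DualMod.ext'
    funext z
    have h1 := hptws w x hx (T z)
    have h2 := hptws (fun n => Λ (w n)) y hy z
    exact tendsto_nhds_unique h2 h1
  let Λc : DualMod (ip := ip) →L[ℂ] DualMod (ip := ip) := ⟨Λ, hcont⟩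
  refine ⟨‖Λc‖ ^ 2, by positivity, fun k hk => ?_⟩
  have h1 := Λc.le_opNorm ⟨k, hk⟩
  rw [norm_def, norm_def] at h1
  have h6 : (Real.sqrt ‖ip' ((Λc ⟨k, hk⟩).toFun) ((Λc ⟨k, hk⟩).toFun)‖) ^ 2
      ≤ (‖Λc‖ * Real.sqrt
          ‖ip' ((⟨k, hk⟩ : DualMod (ip := ip)).toFun) ((⟨k, hk⟩ : DualMod (ip := ip)).toFun)‖) ^ 2 :=
    pow_le_pow_left₀ (Real.sqrt_nonneg _) h1 2
  rw [Real.sq_sqrt (norm_nonneg _), mul_pow, Real.sq_sqrt (norm_nonneg _)] at h6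
  exact h6

/-- The key identity: `⟨f ∘ S, g⟩ = ⟨f, g ∘ T⟩` for adjoint pairs `(T, S)`. -/
lemma adjoint_identity {T S : X → X} (hrel : ∀ x y, ip (T x) y = ip x (S y))
    (hTbd : ∃ C : ℝ, ∀ x, ‖ip (T x) (T x)‖ ≤ C * ‖ip x x‖) :
    ∀ f g, IsBddModMap ip f → IsBddModMap ip g →
      ip' (fun x => f (S x)) g = ip' f (fun x => g (T x)) := by
  have hSrel := adj_rel' h hrel
  have hSadd := Sadd h hrel
  have hSmod : ∀ (b : ↥M) (x : X), S (op b • x) = op b • S x := Tmod h hSrel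
  have hSbd := adj_bound h hrel hTbd
  obtain ⟨CL, hCL0, hCL⟩ := key_bound h hsd hSadd hSmod hSbd
  intro f g hf hg
  have hcomp : ∀ k, IsBddModMap ip k → IsBddModMap ip (fun x => k (S x)) :=
    fun k hk => bdd_compT h hSadd hSmod hSbd hk
  obtain ⟨g₀, hg₀, hrep⟩ := hsd.2.2.2.2.2.2.1 (fun k => ip' (fun x => k (S x)) g)
    ⟨fun k₁ k₂ hk₁ hk₂ => by
      have he : (fun x => (k₁ + k₂) (S x))
          = (fun x => k₁ (S x)) + (fun x => k₂ (S x)) := rfl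
      show ip' (fun x => (k₁ + k₂) (S x)) g = _
      rw [he]
      exact hsd.1 _ _ g (hcomp k₁ hk₁) (hcomp k₂ hk₂) hg,
    fun b k hk => hsd.2.2.2.2.1 b (fun x => k (S x)) g (hcomp k hk) hg,
    ⟨CL * ‖ip' g g‖, fun k hk => by
      have h1 := ip'_cs h hsd (hcomp k hk) hg
      have h2 := hCL k hk
      nlinarith [norm_nonneg (ip' g g), norm_nonneg (ip' k k),
        norm_nonneg (ip' (fun x => k (S x)) g),
        norm_nonneg (ip' (fun x => k (S x)) (fun x => k (S x)))]⟩⟩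
  have hg₀eq : g₀ = fun x => g (T x) := by
    funext x
    have h1 := hrep (fun y => ip y x) (bdd_hat h x)
    rw [hsd.2.2.2.2.2.1 x g₀ hg₀] at h1
    have h2 : (fun y => (fun z => ip z x) (S y)) = (fun y => ip y (T x)) :=
      funext fun y => hSrel y x
    rw [h2] at h1
    rw [hsd.2.2.2.2.2.1 (T x) g hg] at h1
    exact h1.symm
  have hfin := hrep f hf
  rw [hg₀eq] at hfin
  exact hfin

end KeyBound

open Classical in
/-- The extension map `T ↦ T̃`, `T̃ f = f ∘ T*`. -/
noncomputable def extMap (ip : X → X → ↥M) (T : X → X) (f : X → ↥M) : X → ↥M :=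
  if hT : ∃ S : X → X, ∀ x y, ip (T x) y = ip x (S y) then fun y => f (hT.choose y) else f

lemma extMap_eq (h : IsPreHilbertModule ip) {T S : X → X}
    (hrel : ∀ x y, ip (T x) y = ip x (S y)) (f : X → ↥M) :
    extMap ip T f = fun y => f (S y) := by
  have hex : ∃ S' : X → X, ∀ x y, ip (T x) y = ip x (S' y) := ⟨S, hrel⟩
  rw [extMap, dif_pos hex]
  have hSe : S = hex.choose := adj_unique h hrel hex.choose_spec
  rw [← hSe]

end PaschkeAux

end AdjointableExtensionAux

open PaschkeAux in
/-- **Paschke, Proposition 3.6 / Corollary 3.7**: every adjointable operator `T` on a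
pre-Hilbert module `X` over a von Neumann algebra extends uniquely to an adjointable
operator `T̃` on the self-dual completion `X'`; the map `T ↦ T̃` is a *-isomorphism of
`P(X)` into `P(X')`, and `T̃ x̂ = (T x)^`. -/
theorem adjointable_extension {H : Type*} [NormedAddCommGroup H] [InnerProductSpace ℂ H]
    [CompleteSpace H] (M : VonNeumannAlgebra H) {X : Type*} [AddCommGroup X] [Module ℂ X]
    [Module (↥M)ᵐᵒᵖ X] (ip : X → X → ↥M) (h : IsPreHilbertModule ip)
    (ip' : (X → ↥M) → (X → ↥M) → ↥M) (hsd : IsSelfDualExtension ip ip') :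
    ∃ Ext : (X → X) → ((X → ↥M) → (X → ↥M)),
      (∀ T : X → X, IsAdjointable ip T →
        IsAdjointableOnDual ip ip' (Ext T) ∧
        (∀ x : X, Ext T (fun y => ip y x) = fun y => ip y (T x)) ∧
        (∀ S : (X → ↥M) → (X → ↥M), IsAdjointableOnDual ip ip' S →
          (∀ x : X, S (fun y => ip y x) = fun y => ip y (T x)) →
          ∀ f : X → ↥M, IsBddModMap ip f → S f = Ext T f)) ∧
      (∀ T₁ T₂ : X → X, IsAdjointable ip T₁ → IsAdjointable ip T₂ →
        (∀ f : X → ↥M, IsBddModMap ip f →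
            Ext (fun x => T₁ x + T₂ x) f = Ext T₁ f + Ext T₂ f) ∧
        (∀ f : X → ↥M, IsBddModMap ip f → Ext (T₁ ∘ T₂) f = Ext T₁ (Ext T₂ f)) ∧
        ((∀ f : X → ↥M, IsBddModMap ip f → Ext T₁ f = Ext T₂ f) → ∀ x : X, T₁ x = T₂ x)) ∧
      (∀ T S : X → X, IsAdjointable ip T → IsAdjointable ip S →
        (∀ x y : X, ip (T x) y = ip x (S y)) →
        ∀ f g : X → ↥M, IsBddModMap ip f → IsBddModMap ip g →
          ip' (Ext T f) g = ip' f (Ext S g)) := by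
  classical
  refine ⟨extMap ip, ?_, ?_, ?_⟩
  · -- extension properties for a single adjointable T
    intro T hT
    obtain ⟨S, hrel⟩ := hT.2.2
    have hSrel := adj_rel' h hrel
    have hSadd := Sadd h hrel
    have hSmod : ∀ (b : ↥M) (x : X), S (op b • x) = op b • S x := Tmod h hSrel
    have hTmod : ∀ (b : ↥M) (x : X), T (op b • x) = op b • T x := Tmod h hrel
    have hSbd := adj_bound h hrel hT.2.1
    have hev := hsd.2.2.2.2.2.1
    have hstar := hsd.2.2.2.1
    refine ⟨⟨?_, ?_, ?_⟩, ?_, ?_⟩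
    · -- maps bounded maps to bounded maps
      intro f hf
      rw [extMap_eq h hrel]
      exact bdd_compT h hSadd hSmod hSbd hf
    · -- additivity
      intro f g hf hg
      rw [extMap_eq h hrel, extMap_eq h hrel, extMap_eq h hrel]
      rfl
    · -- adjointability on the dual
      refine ⟨fun g => fun x => g (T x), fun g hg => bdd_compT h hT.1 hTmod hT.2.1 hg,
        fun f g hf hg => ?_⟩
      rw [extMap_eq h hrel]
      exact adjoint_identity h hsd hrel hT.2.1 f g hf hg
    · -- action on hat vectors
      intro x
      rw [extMap_eq h hrel]
      funext y
      exact hSrel y x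
    · -- uniqueness
      intro S' hS' hhat f hf
      obtain ⟨hS'bdd, hS'add, R', hR'bdd, hR'⟩ := hS'
      rw [extMap_eq h hrel]
      funext x
      have hRhat : ∀ z : X, R' (fun y => ip y z) = fun y => ip y (S z) := by
        intro z
        funext y
        have h1 := hR' (fun w => ip w y) (fun w => ip w z) (bdd_hat h y) (bdd_hat h z)
        rw [hhat y] at h1
        rw [hev (T y) (fun w => ip w z) (bdd_hat h z)] at h1
        rw [hev y (R' (fun w => ip w z)) (hR'bdd _ (bdd_hat h z))] at h1
        rw [← h1]
        exact hrel y z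
      calc S' f x
          = ip' (fun y => ip y x) (S' f) := (hev x (S' f) (hS'bdd f hf)).symm
        _ = star (ip' (S' f) (fun y => ip y x)) :=
            hstar (fun y => ip y x) (S' f) (bdd_hat h x) (hS'bdd f hf)
        _ = star (ip' f (R' (fun y => ip y x))) := by
            rw [hR' f (fun y => ip y x) hf (bdd_hat h x)]
        _ = star (ip' f (fun y => ip y (S x))) := by rw [hRhat x]
        _ = star (star (ip' (fun y => ip y (S x)) f)) := by
            rw [hstar f (fun y => ip y (S x)) hf (bdd_hat h (S x))]
        _ = ip' (fun y => ip y (S x)) f := star_star _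
        _ = f (S x) := hev (S x) f hf
  · -- algebra homomorphism properties and injectivity
    intro T₁ T₂ hT₁ hT₂
    obtain ⟨S₁, hrel₁⟩ := hT₁.2.2
    obtain ⟨S₂, hrel₂⟩ := hT₂.2.2
    refine ⟨?_, ?_, ?_⟩
    · -- additivity in T
      intro f hf
      have hrel12 : ∀ x y, ip ((fun x => T₁ x + T₂ x) x) y = ip x (S₁ y + S₂ y) := by
        intro x y
        show ip (T₁ x + T₂ x) y = _
        rw [h.add_left, add_right h, hrel₁, hrel₂]
      rw [extMap_eq h hrel12 f, extMap_eq h hrel₁ f, extMap_eq h hrel₂ f]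
      funext y
      simp only [Pi.add_apply]
      exact hf.1 (S₁ y) (S₂ y)
    · -- multiplicativity in T
      intro f hf
      have hrelc : ∀ x y, ip ((T₁ ∘ T₂) x) y = ip x (S₂ (S₁ y)) := by
        intro x y
        show ip (T₁ (T₂ x)) y = _
        rw [hrel₁, hrel₂]
      rw [extMap_eq h hrelc f, extMap_eq h hrel₂ f, extMap_eq h hrel₁ (fun y => f (S₂ y))]
    · -- injectivity
      intro hfe x
      have h1 := hfe (fun y => ip y x) (bdd_hat h x)
      rw [extMap_eq h hrel₁, extMap_eq h hrel₂] at h1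
      apply ext_right h
      intro y
      calc ip y (T₁ x) = ip (S₁ y) x := (adj_rel' h hrel₁ y x).symm
        _ = ip (S₂ y) x := congrFun h1 y
        _ = ip y (T₂ x) := adj_rel' h hrel₂ y x
  · -- compatibility with adjoints
    intro T S hT hS hrel f g hf hg
    rw [extMap_eq h hrel f, extMap_eq h (adj_rel' h hrel) g]
    exact adjoint_identity h hsd hrel hT.2.1 f g hf hg
end
end
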